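/- arXiv:2406.09361 — 12 statements merged into one kernel-verified Lean document; each statement's English description precedes it below -/
import Mathlib

section
/- Let X be a finite subset of ℝ^d of full rank (i.e., not contained in any affine hyperplane of dimension less than d). Then |X + X| ≥ (d + 1)|X| − (d+1)d/2. -/
/-!
Induct on `|X|`, removing a vertex `v` of the convex hull of `X` and setting `Y = X \ {v}`.
A sum `v + y` whose midpoint lies outside the convex hull of `Y` is not in `Y + Y`.
If `v` lies in the affine span of `Y`, the rank is unchanged and `v` sees, through the hull of `Y`,
at least `rank X` points of `Y`; with `v + v` these give `rank X + 1` new sums.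
Otherwise the rank grows by at most one and all `|X|` sums `v + y` are new.
The second case needs the bound for `Y` at rank `r - 1`, so the bound
`(r + 1)|X| ≤ |X + X| + C(r + 1, 2)` is proved for every `r ≤ rank X`.
-/

open Classical Pointwise

open Finset Module

lemma Finset.card_add_self_add_card_le {α : Type*} [AddCommGroup α] [DecidableEq α]
    {X Y G : Finset α} {v : α} (hv : v ∈ X) (hY : Y ⊆ X) (hG : G ⊆ X)
    (hnew : ∀ y ∈ G, v + y ∉ Y + Y) : #(Y + Y) + #G ≤ #(X + X) := by
  have hdisj : Disjoint (Y + Y) (v +ᵥ G) := by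
    rw [disjoint_right]
    rintro _ hz
    obtain ⟨y, hy, rfl⟩ := mem_vadd_finset.1 hz
    exact hnew y hy
  calc #(Y + Y) + #G = #(Y + Y) + #(v +ᵥ G) := by rw [card_vadd_finset]
    _ = #((Y + Y) ∪ (v +ᵥ G)) := (card_union_of_disjoint hdisj).symm
    _ ≤ #(X + X) := card_le_card <| union_subset (add_subset_add hY hY)
        ((vadd_finset_subset_vadd hv).trans (add_subset_add_left hG))

section Vector

variable {E : Type*} [AddCommGroup E] [Module ℝ E] {x y : E}

lemma add_notMem_add_of_midpoint_notMem_convexHull {s : Set E}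
    (h : midpoint ℝ x y ∉ convexHull ℝ s) : x + y ∉ s + s := by
  rintro ⟨a, ha, b, hb, hab : a + b = x + y⟩
  have hmid : midpoint ℝ x y = midpoint ℝ a b := by
    rw [midpoint_eq_smul_add, midpoint_eq_smul_add, ← hab]
  exact h (hmid ▸ (convex_convexHull ℝ s).midpoint_mem (subset_convexHull ℝ s ha)
    (subset_convexHull ℝ s hb))

lemma AffineSubspace.midpoint_notMem_of_notMem_of_mem {Q : AffineSubspace ℝ E} (hx : x ∉ Q)
    (hy : y ∈ Q) : midpoint ℝ x y ∉ Q := by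
  intro hm
  have hym : y ≠ midpoint ℝ x y := fun h => hx ((midpoint_eq_right_iff ℝ).1 h.symm ▸ hy)
  exact hx (right_mem_of_wbtw (wbtw_midpoint ℝ x y).symm hy hm hym)

lemma Finset.card_add_self_erase_add_card_le [DecidableEq E] {X : Finset E} {v : E} (hvX : v ∈ X)
    (hv : v ∉ affineSpan ℝ (X.erase v : Set E)) : #(X.erase v + X.erase v) + #X ≤ #(X + X) := by
  refine card_add_self_add_card_le hvX (erase_subset v X) Subset.rfl fun y hy => ?_
  rw [← mem_coe, coe_add]
  refine add_notMem_add_of_midpoint_notMem_convexHull fun hm => ?_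
  replace hm := convexHull_subset_affineSpan _ hm
  by_cases hyv : y = v
  · rw [hyv, midpoint_self] at hm
    exact hv hm
  · exact AffineSubspace.midpoint_notMem_of_notMem_of_mem hv
      (subset_affineSpan ℝ _ (mem_erase.2 ⟨hyv, hy⟩)) hm

end Vector

namespace Finset

variable {E : Type*} [AddCommGroup E] [Module ℝ E] [TopologicalSpace E] [T2Space E]
  [IsTopologicalAddGroup E] [ContinuousSMul ℝ E]

lemma exists_mem_notMem_convexHull_erase [LocallyConvexSpace ℝ E] [DecidableEq E]
    {X : Finset E} (hX : X.Nonempty) : ∃ v ∈ X, v ∉ convexHull ℝ (X.erase v : Set E) := by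
  obtain ⟨v, hv⟩ := (X.finite_toSet.isCompact_convexHull ℝ).extremePoints_nonempty
    (hX.to_set.convexHull (𝕜 := ℝ))
  refine ⟨v, extremePoints_convexHull_subset hv, fun hmem => ?_⟩
  rw [(convex_convexHull ℝ _).mem_extremePoints_iff_mem_sdiff_convexHull_sdiff] at hv
  exact hv.2 (convexHull_mono
    (by rw [coe_erase]; exact Set.sdiff_subset_sdiff_left (subset_convexHull ℝ _)) hmem)

lemma finrank_vectorSpan_insert_le_card_isVisible {s : Finset E} {x : E}
    (hx : x ∉ convexHull ℝ (s : Set E)) :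
    finrank ℝ (vectorSpan ℝ (insert x (s : Set E))) ≤
      #{y ∈ s | IsVisible ℝ (convexHull ℝ (s : Set E)) x y} := by
  have hspan : vectorSpan ℝ (insert x (s : Set E)) = Submodule.span ℝ (-x +ᵥ (s : Set E)) := by
    rw [vectorSpan_eq_span_vsub_set_right ℝ (Set.mem_insert x _), Set.image_insert_eq,
      vsub_self, Submodule.span_insert_zero, ← Set.image_vadd]
    congr! 2
    exact (neg_add_eq_sub _ _).symm
  rw [hspan]
  refine finrank_le_of_rank_le ?_
  rw [← Cardinal.mk_coe_finset, ← coe_sort_coe, coe_filter]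
  exact rank_le_card_isVisible (s.finite_toSet.isClosed_convexHull ℝ) hx

lemma card_add_self_erase_add_finrank_vectorSpan_lt [DecidableEq E] {X : Finset E} {v : E}
    (hvX : v ∈ X) (hv : v ∉ convexHull ℝ (X.erase v : Set E)) :
    #(X.erase v + X.erase v) + finrank ℝ (vectorSpan ℝ (X : Set E)) < #(X + X) := by
  set Y := X.erase v
  set V := {y ∈ Y | IsVisible ℝ (convexHull ℝ (Y : Set E)) v y}
  have hX : (X : Set E) = insert v (Y : Set E) := by simp [Y, hvX]
  have hrank : finrank ℝ (vectorSpan ℝ (X : Set E)) ≤ #V :=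
    hX ▸ finrank_vectorSpan_insert_le_card_isVisible hv
  have hvV : v ∉ V := fun h => notMem_erase v X (mem_filter.1 h).1
  have hstep : #(Y + Y) + #(insert v V) ≤ #(X + X) := by
    refine card_add_self_add_card_le hvX (erase_subset v X)
      (insert_subset hvX ((filter_subset _ _).trans (erase_subset v X))) fun y hy => ?_
    rw [← mem_coe, coe_add]
    refine add_notMem_add_of_midpoint_notMem_convexHull ?_
    rcases mem_insert.1 hy with rfl | hy
    · rwa [midpoint_self]
    · obtain ⟨hyY, hvis⟩ := mem_filter.1 hy
      exact fun hm => hvis hm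
        (sbtw_midpoint_of_ne ℝ (ne_of_mem_of_not_mem (subset_convexHull ℝ _ hyY) hv).symm)
  rw [card_insert_of_notMem hvV] at hstep
  omega

theorem succ_mul_card_le_card_add_self_add_choose [LocallyConvexSpace ℝ E] [DecidableEq E]
    (X : Finset E) {r : ℕ} (hr : r ≤ finrank ℝ (vectorSpan ℝ (X : Set E))) :
    (r + 1) * #X ≤ #(X + X) + (r + 1).choose 2 := by
  induction X using strongInduction generalizing r with
  | H X ih =>
  obtain rfl | hne := X.eq_empty_or_nonempty
  · simp
  obtain ⟨v, hvX, hv⟩ := exists_mem_notMem_convexHull_erase hne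
  have hcard : #(X.erase v) + 1 = #X := card_erase_add_one hvX
  have hX : (X : Set E) = insert v (X.erase v : Set E) := by simp [hvX]
  by_cases hspan : v ∈ affineSpan ℝ (X.erase v : Set E)
  · have hrank : finrank ℝ (vectorSpan ℝ (X : Set E)) =
        finrank ℝ (vectorSpan ℝ (X.erase v : Set E)) := by
      rw [hX, vectorSpan_insert_eq_vectorSpan hspan]
    have ih' := ih _ (erase_ssubset hvX) (hr.trans_eq hrank)
    have hstep := card_add_self_erase_add_finrank_vectorSpan_lt hvX hv
    rw [← hcard]
    linarith
  · have hstep := card_add_self_erase_add_card_le hvX hspan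
    obtain _ | s := r
    · omega
    have hrank : finrank ℝ (vectorSpan ℝ (X : Set E)) ≤
        finrank ℝ (vectorSpan ℝ (X.erase v : Set E)) + 1 :=
      hX ▸ finrank_vectorSpan_insert_le_set ℝ _ v
    have ih' := ih _ (erase_ssubset hvX) (by omega : s ≤ _)
    rw [Nat.choose_succ_succ', Nat.choose_one_right, ← hcard]
    linarith

end Finset

/-- Freĭman's lemma: a finite full-rank subset `X ⊆ ℝ^d` satisfies
`|X + X| ≥ (d+1)|X| - (d+1)d/2`. -/
theorem freiman_lemma (d : ℕ) (X : Finset (Fin d → ℝ))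
    (hfull : Module.finrank ℝ (affineSpan ℝ (X : Set (Fin d → ℝ))).direction = d) :
    ((d : ℤ) + 1) * X.card - ((d + 1).choose 2 : ℤ) ≤ ((X + X).card : ℤ) := by
  rw [direction_affineSpan] at hfull
  have h := X.succ_mul_card_le_card_add_self_add_choose hfull.ge
  zify at h
  linarith
end

section
/- Let d, r ∈ ℕ and let X ⊆ ℝ^d be a finite set with rank(X) ≥ r. Then there exists a set T ⊆ X with |T| ≤ r/2 + 1 such that |X + T| ≥ r|X|/6. -/
/-!
Greedy argument. Starting from one point of `X`, keep adjoining to `T` a point `t ∈ X` for which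
`X + insert t T` has at least `|X|/3` more elements than `X + T`. If no such `t` exists, pick a
linear functional `f` that is constant (`= c`) on the affine span `A` of `T` and takes no value
`c` on `X \ A`; translating by a maximiser of `f` (resp. `-f`) gains every point of `X` with
`f > c` (resp. `f < c`), so more than a third of `X` lies in `A`. As `dim A < |T| ≤ r/2` while
`rank X ≥ r`, `X` meets at least `r/2 + 1` cosets of the direction of `A`, and translates of
`X ∩ A` by representatives of distinct cosets are disjoint.
-/

open Classical Pointwise

/-- The rank of a finite set `X ⊆ ℝ^d`: the minimum dimension of an affine
subspace containing `X`. -/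
noncomputable def affRank {d : ℕ} (X : Finset (Fin d → ℝ)) : ℕ :=
  Module.finrank ℝ (affineSpan ℝ (X : Set (Fin d → ℝ))).direction

open Finset Module

section Field

variable {k E : Type*} [Field k] [AddCommGroup E] [Module k E]

theorem Submodule.exists_dual_forall_mem_eq_zero_and_ne_zero [Infinite k] (p : Submodule k E)
    (S : Finset E) (hS : ∀ v ∈ S, v ∉ p) :
    ∃ f : Dual k E, (∀ u ∈ p, f u = 0) ∧ ∀ v ∈ S, f v ≠ 0 := by
  let q : S → Submodule k (Dual k (E ⧸ p)) := fun v ↦ LinearMap.ker (Dual.eval k _ (p.mkQ v))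
  have hq : ∀ v, q v ≠ ⊤ := by
    intro v hv
    apply hS v v.2
    rw [← Submodule.Quotient.mk_eq_zero, ← Module.forall_dual_apply_eq_zero_iff k]
    intro φ
    have hφ : φ ∈ q v := hv ▸ Submodule.mem_top
    simpa [q] using hφ
  obtain ⟨ψ, hψ⟩ : ∃ ψ, ψ ∉ ⋃ v, (q v : Set (Dual k (E ⧸ p))) := by
    by_contra! h
    obtain ⟨v, hv⟩ := Subspace.exists_eq_top_of_iUnion_eq_univ (Set.eq_univ_of_forall h)
    exact hq v hv
  refine ⟨ψ ∘ₗ p.mkQ, fun u hu ↦ by simp [(Submodule.Quotient.mk_eq_zero p).2 hu], ?_⟩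
  exact fun v hv h ↦ hψ (Set.mem_iUnion.2 ⟨⟨v, hv⟩, h⟩)

theorem AffineSubspace.exists_dual_forall_mem_eq_and_ne [Infinite k] {A : AffineSubspace k E}
    {a : E} (ha : a ∈ A) (S : Finset E) (hS : ∀ x ∈ S, x ∉ A) :
    ∃ f : Dual k E, (∀ y ∈ A, f y = f a) ∧ ∀ x ∈ S, f x ≠ f a := by
  obtain ⟨f, hdir, hS'⟩ := A.direction.exists_dual_forall_mem_eq_zero_and_ne_zero
    (S.image (· - a)) (by
      simp only [mem_image, forall_exists_index, and_imp, forall_apply_eq_imp_iff₂]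
      exact fun x hx ↦ by simpa [vsub_eq_sub] using
        (vsub_right_mem_direction_iff_mem ha x).not.2 (hS x hx))
  refine ⟨f, fun y hy ↦ ?_, fun x hx ↦ ?_⟩
  · simpa [sub_eq_zero] using hdir (y - a) (vsub_mem_direction hy ha)
  · simpa [sub_eq_zero] using hS' _ (mem_image_of_mem _ hx)

theorem finrank_vectorSpan_add_one_le_card {s : Finset E} (hs : s.Nonempty) :
    finrank k (vectorSpan k (s : Set E)) + 1 ≤ #s := by
  obtain ⟨n, hn⟩ := Nat.exists_eq_add_one.2 hs.card_pos
  have := finrank_vectorSpan_image_finset_le k id s hn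
  rw [image_id] at this
  omega

theorem Submodule.exists_subset_injOn_mkQ_finrank_vectorSpan_le (p : Submodule k E)
    [FiniteDimensional k p] {X : Finset E} (hX : X.Nonempty) :
    ∃ R ⊆ X, Set.InjOn p.mkQ R ∧
      finrank k (vectorSpan k (X : Set E)) + 1 ≤ finrank k p + #R := by
  obtain ⟨R, hRX, hinj, himage⟩ := exists_subset_injOn_image_eq_of_surjOn (f := p.mkQ)
    (X : Set E) (X.image p.mkQ) (by rw [coe_image]; exact Set.surjOn_image _ _)
  refine ⟨R, coe_subset.1 hRX, hinj, ?_⟩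
  have : FiniteDimensional k (vectorSpan k (R : Set E)) :=
    finiteDimensional_vectorSpan_of_finite k R.finite_toSet
  have hspan : vectorSpan k (X : Set E) ≤ p ⊔ vectorSpan k (R : Set E) := by
    have hmap_image (s : Finset E) :
        (vectorSpan k (s : Set E)).map p.mkQ = vectorSpan k (s.image p.mkQ : Set (E ⧸ p)) := by
      simpa using AffineMap.map_vectorSpan (k := k) (f := p.mkQ.toAffineMap) (s := (s : Set E))
    have hmap : (vectorSpan k (X : Set E)).map p.mkQ =
        (vectorSpan k (R : Set E)).map p.mkQ := by
      rw [hmap_image, hmap_image, himage]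
    rw [← Submodule.comap_map_mkQ, ← hmap]
    exact Submodule.le_comap_map _ _
  have hR : R.Nonempty := by
    rw [← image_nonempty (f := p.mkQ), himage]
    exact hX.image _
  calc finrank k (vectorSpan k (X : Set E)) + 1
      ≤ finrank k p + finrank k (vectorSpan k (R : Set E)) + 1 := by
        gcongr
        exact (Submodule.finrank_mono hspan).trans
          (Submodule.finrank_add_le_finrank_add_finrank _ _)
    _ ≤ finrank k p + #R := by
        rw [add_assoc]
        exact Nat.add_le_add_left (finrank_vectorSpan_add_one_le_card hR) _

theorem AffineSubspace.card_add_eq_card_mul_card_of_injOn_mkQ [DecidableEq E]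
    (A : AffineSubspace k E) {X₀ R : Finset E} (hX₀ : ∀ x ∈ X₀, x ∈ A)
    (hR : Set.InjOn A.direction.mkQ R) : #(X₀ + R) = #X₀ * #R := by
  refine card_add_iff.2 ?_
  rintro ⟨x, r⟩ hxr ⟨x', r'⟩ hxr' h
  simp only [Set.mem_prod] at hxr hxr' h
  have hr : r = r' := hR hxr.2 hxr'.2 <| by
    rw [Submodule.mkQ_apply, Submodule.mkQ_apply, Submodule.Quotient.eq]
    have : r - r' = x' - x := by rw [sub_eq_sub_iff_add_eq_add, add_comm r, h, add_comm]
    simpa [this] using vsub_mem_direction (hX₀ x' hxr'.1) (hX₀ x hxr.1)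
  subst hr
  simp_all

theorem AffineSubspace.exists_card_eq_mul_card_le_card_add [DecidableEq E]
    {A : AffineSubspace k E} [FiniteDimensional k A.direction] {X X₀ : Finset E}
    (hX₀X : X₀ ⊆ X) (hX₀A : ∀ x ∈ X₀, x ∈ A) (hX : X.Nonempty) {m : ℕ}
    (hm : finrank k A.direction + m ≤ finrank k (vectorSpan k (X : Set E)) + 1) :
    ∃ R ⊆ X, #R = m ∧ m * #X₀ ≤ #(X + R) := by
  obtain ⟨R, hRX, hinj, hrank⟩ := A.direction.exists_subset_injOn_mkQ_finrank_vectorSpan_le hX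
  obtain ⟨R', hR'R, rfl⟩ := exists_subset_card_eq (show m ≤ #R by omega)
  refine ⟨R', hR'R.trans hRX, rfl, ?_⟩
  rw [mul_comm,
    ← A.card_add_eq_card_mul_card_of_injOn_mkQ hX₀A (hinj.mono (by simpa using hR'R))]
  exact card_le_card (add_subset_add_right hX₀X)

end Field

section OrderedField

variable {k E : Type*} [Field k] [LinearOrder k] [IsStrictOrderedRing k] [AddCommGroup E]
  [Module k E]

theorem card_add_add_card_filter_lt_le_card_add_insert [DecidableEq E] {X T : Finset E}
    (f : Dual k E) {c : k} (hT : ∀ t ∈ T, f t = c) {b : E} (hb : ∀ x ∈ X, f x ≤ f b) :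
    #(X + T) + #{y ∈ X | c < f y} ≤ #(X + insert b T) := by
  have hdisj : Disjoint (X + T) ({y ∈ X | c < f y}.image (· + b)) := by
    simp only [disjoint_right, mem_image, mem_filter, mem_add]
    rintro _ ⟨y, ⟨-, hy⟩, rfl⟩ ⟨x, hx, t, ht, hxt⟩
    have := congrArg f hxt
    simp only [map_add, hT t ht] at this
    linarith [hb x hx]
  have hsub : (X + T) ∪ {y ∈ X | c < f y}.image (· + b) ⊆ X + insert b T := by
    refine union_subset (add_subset_add_left (subset_insert b T)) ?_
    intro z hz
    obtain ⟨y, hy, rfl⟩ := mem_image.1 hz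
    exact add_mem_add (mem_filter.1 hy).1 (mem_insert_self b T)
  have := card_le_card hsub
  rwa [card_union_of_disjoint hdisj, card_image_of_injective _ (add_left_injective b)] at this

theorem exists_two_mul_card_add_add_card_filter_notMem_le [DecidableEq E] {X T : Finset E}
    (hX : X.Nonempty) (hT : T.Nonempty) : ∃ t ∈ X,
      2 * #(X + T) + #{x ∈ X | x ∉ affineSpan k (T : Set E)} ≤ 2 * #(X + insert t T) := by
  obtain ⟨a, ha⟩ := hT
  obtain ⟨f, hfA, hfX⟩ := (affineSpan k (T : Set E)).exists_dual_forall_mem_eq_and_ne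
    (mem_affineSpan k (mem_coe.2 ha)) {x ∈ X | x ∉ affineSpan k (T : Set E)}
    (fun x hx ↦ (mem_filter.1 hx).2)
  have hfT : ∀ t ∈ T, f t = f a := fun t ht ↦ hfA t (mem_affineSpan k (mem_coe.2 ht))
  obtain ⟨bmax, hbmax, hmax⟩ := X.exists_max_image f hX
  obtain ⟨bmin, hbmin, hmin⟩ := X.exists_min_image f hX
  have hgain_max := card_add_add_card_filter_lt_le_card_add_insert f hfT hmax
  have hgain_min := card_add_add_card_filter_lt_le_card_add_insert (-f) (c := -f a)
    (by simpa using hfT) (by simpa using hmin)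
  have hcover : {x ∈ X | x ∉ affineSpan k (T : Set E)} ⊆
      {y ∈ X | f a < f y} ∪ {y ∈ X | -f a < (-f) y} := by
    intro x hx
    rcases (hfX x hx).lt_or_gt with h | h <;> simp_all
  have := (card_le_card hcover).trans (card_union_le _ _)
  rcases le_total #(X + insert bmax T) #(X + insert bmin T) with h | h
  · exact ⟨bmin, hbmin, by omega⟩
  · exact ⟨bmax, hbmax, by omega⟩

theorem exists_card_add_insert_ge_or_card_lt_three_mul_card_filter_mem [DecidableEq E]
    {X T : Finset E} (hX : X.Nonempty) (hT : T.Nonempty) :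
    (∃ t ∈ X, 3 * #(X + T) + #X ≤ 3 * #(X + insert t T)) ∨
      #X < 3 * #{x ∈ X | x ∈ affineSpan k (T : Set E)} := by
  obtain ⟨t, htX, ht⟩ := exists_two_mul_card_add_add_card_filter_notMem_le (k := k) hX hT
  have := card_filter_add_card_filter_not (s := X) (· ∈ affineSpan k (T : Set E))
  by_cases hgain : 3 * #(X + T) + #X ≤ 3 * #(X + insert t T)
  · exact .inl ⟨t, htX, hgain⟩
  · right
    omega

theorem exists_translates_growth_or_heavy_affineSpan [DecidableEq E] {X : Finset E}
    (hX : X.Nonempty) (j : ℕ) :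
    ∃ T ⊆ X, T.Nonempty ∧
      (#T = j + 1 ∧ (3 + j) * #X ≤ 3 * #(X + T) ∨
        #T ≤ j ∧ #X < 3 * #{x ∈ X | x ∈ affineSpan k (T : Set E)}) := by
  induction j with
  | zero =>
    obtain ⟨x, hx⟩ := hX
    exact ⟨{x}, singleton_subset_iff.2 hx, singleton_nonempty x,
      .inl ⟨card_singleton x, by simp⟩⟩
  | succ j ih =>
    obtain ⟨T, hTX, hT, ⟨hcard, hgrowth⟩ | ⟨hcard, hheavy⟩⟩ := ih
    · rcases exists_card_add_insert_ge_or_card_lt_three_mul_card_filter_mem (k := k) hX hT with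
        ⟨t, htX, hgain⟩ | hheavy
      · have htT : t ∉ T := fun htT ↦ by
          rw [insert_eq_of_mem htT] at hgain
          exact hX.card_pos.ne' (by omega)
        refine ⟨insert t T, insert_subset htX hTX, insert_nonempty t T, .inl ⟨?_, ?_⟩⟩
        · rw [card_insert_of_notMem htT, hcard]
        · linarith
      · exact ⟨T, hTX, hT, .inr ⟨hcard.le, hheavy⟩⟩
    · exact ⟨T, hTX, hT, .inr ⟨hcard.trans j.le_succ, hheavy⟩⟩

theorem exists_subset_card_le_and_mul_card_le_card_add [DecidableEq E] {X : Finset E} {r : ℕ}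
    (hr : r ≤ finrank k (vectorSpan k (X : Set E))) :
    ∃ T ⊆ X, #T ≤ r / 2 + 1 ∧ r * #X ≤ 6 * #(X + T) := by
  obtain rfl | hX := X.eq_empty_or_nonempty
  · exact ⟨∅, empty_subset _, by simp, by simp⟩
  obtain ⟨T, hTX, hT, ⟨hcard, hgrowth⟩ | ⟨hcard, hheavy⟩⟩ :=
    exists_translates_growth_or_heavy_affineSpan (k := k) hX (r / 2)
  · refine ⟨T, hTX, hcard.le, ?_⟩
    have : r ≤ 2 * (3 + r / 2) := by omega
    nlinarith
  · have : FiniteDimensional k (affineSpan k (T : Set E)).direction :=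
      finiteDimensional_direction_affineSpan_of_finite k T.finite_toSet
    have hdim : finrank k (affineSpan k (T : Set E)).direction + 1 ≤ #T := by
      rw [direction_affineSpan]
      exact finrank_vectorSpan_add_one_le_card hT
    obtain ⟨R, hRX, hRcard, hR⟩ :=
      (affineSpan k (T : Set E)).exists_card_eq_mul_card_le_card_add (filter_subset _ X)
        (fun x hx ↦ (mem_filter.1 hx).2) hX (m := r / 2 + 1) (by omega)
    refine ⟨R, hRX, hRcard.le, ?_⟩
    have : r ≤ 2 * (r / 2 + 1) := by omega
    nlinarith

end OrderedField

/-- Weak Freĭman's lemma via few translates: if `rank(X) ≥ r` then there is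
`T ⊆ X` with `|T| ≤ r/2 + 1` and `|X + T| ≥ r|X|/6`. -/
theorem weak_freiman_few_translates (d r : ℕ) (X : Finset (Fin d → ℝ))
    (hrank : r ≤ affRank X) :
    ∃ T ⊆ X, (T.card : ℝ) ≤ (r : ℝ) / 2 + 1 ∧
      (r : ℝ) * X.card / 6 ≤ ((X + T).card : ℝ) := by
  obtain ⟨T, hTX, hcard, hsize⟩ := exists_subset_card_le_and_mul_card_le_card_add (k := ℝ)
    (show r ≤ finrank ℝ (vectorSpan ℝ (X : Set (Fin d → ℝ))) by
      rwa [affRank, direction_affineSpan] at hrank)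
  refine ⟨T, hTX, ?_, ?_⟩
  · calc (#T : ℝ) ≤ ((r / 2 : ℕ) : ℝ) + 1 := by exact_mod_cast hcard
      _ ≤ (r : ℝ) / 2 + 1 := by gcongr; exact Nat.cast_div_le
  · rw [div_le_iff₀ (by norm_num), mul_comm _ (6 : ℝ)]
    exact_mod_cast hsize
end

section
/- Let d, r ∈ ℕ, let γ > 0, and let X ⊆ ℝ^d be a finite set with rank(X) ≥ r. If T ⊆ ℝ^d is a finite set with 0 ∈ T, rank(T) < r, and |X ∩ span(T)| ≤ γ|X|, then there exists x* ∈ X such that |X + (T ∪ {x*})| ≥ |X + T| + (1 − γ)|X|/2. -/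
set_option maxHeartbeats 1000000


open Classical Pointwise

/-- There is a linear functional vanishing on a subspace `V` and nonzero on each
element of a finite set `S` disjoint from `V`. -/
lemma exists_functional {d : ℕ} (V : Submodule ℝ (Fin d → ℝ)) (S : Finset (Fin d → ℝ))
    (hS : ∀ x ∈ S, x ∉ V) :
    ∃ f : Module.Dual ℝ (Fin d → ℝ), (∀ v ∈ V, f v = 0) ∧ ∀ x ∈ S, f x ≠ 0 := by
  classical
  set A : Submodule ℝ (Module.Dual ℝ (Fin d → ℝ)) := V.dualAnnihilator with hA
  -- the evaluation at `x`, restricted to `A`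
  let e : (Fin d → ℝ) → (A →ₗ[ℝ] ℝ) := fun x =>
    (Module.Dual.eval ℝ (Fin d → ℝ) x).comp A.subtype
  have hproper : ∀ x ∈ S, LinearMap.ker (e x) ≠ ⊤ := by
    intro x hx
    obtain ⟨f, hf1, hf2⟩ := V.exists_dual_map_eq_bot_of_notMem (hS x hx) inferInstance
    have hfA : f ∈ A := by
      rw [hA, Submodule.mem_dualAnnihilator]
      intro w hw
      have : f w ∈ V.map f := Submodule.mem_map_of_mem hw
      rw [hf2] at this
      simpa using this
    intro htop
    have : (⟨f, hfA⟩ : A) ∈ LinearMap.ker (e x) := by rw [htop]; trivial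
    exact hf1 (by simpa [e, Module.Dual.eval] using this)
  by_cases hSe : S.Nonempty
  · have hfin : Finite {x // x ∈ S} := inferInstance
    have hne : (⋃ x : {x // x ∈ S}, ((LinearMap.ker (e x.1) : Submodule ℝ A) : Set A))
        ≠ Set.univ := by
      intro hcov
      obtain ⟨i, hi⟩ := Subspace.exists_eq_top_of_iUnion_eq_univ (k := ℝ) (E := ↥A)
        (p := fun x : {x // x ∈ S} => (LinearMap.ker (e x.1) : Submodule ℝ A)) hcov
      exact hproper i.1 i.2 hi
    have : ∃ g : A, g ∉ ⋃ x : {x // x ∈ S}, ((LinearMap.ker (e x.1) : Submodule ℝ A) : Set A) := by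
      by_contra h
      push_neg at h
      exact hne (Set.eq_univ_of_forall h)
    obtain ⟨g, hg⟩ := this
    refine ⟨(g : Module.Dual ℝ (Fin d → ℝ)), ?_, ?_⟩
    · intro v hv
      have hg2 := g.2
      rw [Submodule.mem_dualAnnihilator] at hg2
      exact hg2 v hv
    · intro x hx hx0
      apply hg
      refine Set.mem_iUnion.mpr ⟨⟨x, hx⟩, ?_⟩
      simpa [e, Module.Dual.eval] using hx0
  · exact ⟨0, by simp, fun x hx => absurd ⟨x, hx⟩ hSe⟩

/-- Greedy phase: if `0 ∈ T`, `rank(T) < r ≤ rank(X)` and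
`|X ∩ span(T)| ≤ γ|X|`, then some `x* ∈ X` satisfies
`|X + (T ∪ {x*})| ≥ |X + T| + (1 − γ)|X|/2`. -/
theorem greedy_phase (d r : ℕ) (γ : ℝ) (hγ : 0 < γ)
    (X T : Finset (Fin d → ℝ))
    (hX : r ≤ affRank X)
    (h0 : (0 : Fin d → ℝ) ∈ T)
    (hT : affRank T < r)
    (hspan : ((X.filter (fun x => x ∈ Submodule.span ℝ (T : Set (Fin d → ℝ)))).card : ℝ)
      ≤ γ * X.card) :
    ∃ xstar ∈ X,
      ((X + T).card : ℝ) + (1 - γ) * X.card / 2 ≤ ((X + insert xstar T).card : ℝ) := by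
  classical
  set V : Submodule ℝ (Fin d → ℝ) := Submodule.span ℝ (T : Set (Fin d → ℝ)) with hV
  -- X is nonempty
  have hr1 : 1 ≤ r := Nat.one_le_iff_ne_zero.mpr (by rintro rfl; exact Nat.not_lt_zero _ hT)
  have hXne : X.Nonempty := by
    rcases X.eq_empty_or_nonempty with h | h
    · exfalso
      rw [h] at hX
      have : affRank (∅ : Finset (Fin d → ℝ)) = 0 := by
        simp [affRank, AffineSubspace.span_empty]
      omega
    · exact h
  -- the functional
  obtain ⟨f, hfV, hfS⟩ := exists_functional V (X.filter (fun x => x ∉ V))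
    (fun x hx => (Finset.mem_filter.mp hx).2)
  have hfS' : ∀ x ∈ X, x ∉ V → f x ≠ 0 := fun x hx hxV =>
    hfS x (Finset.mem_filter.mpr ⟨hx, hxV⟩)
  -- WLOG the positive side is at least as big as the negative side
  obtain ⟨g, hgV, hgS, hgbal⟩ :
      ∃ g : Module.Dual ℝ (Fin d → ℝ), (∀ v ∈ V, g v = 0) ∧ (∀ x ∈ X, x ∉ V → g x ≠ 0) ∧
        (X.filter (fun x => g x < 0)).card ≤ (X.filter (fun x => 0 < g x)).card := by
    rcases le_total (X.filter (fun x => f x < 0)).card (X.filter (fun x => 0 < f x)).card with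
      h | h
    · exact ⟨f, hfV, hfS', h⟩
    · refine ⟨-f, fun v hv => by simp [hfV v hv], fun x hx hxV => by simpa using hfS' x hx hxV,
        ?_⟩
      have e1 : X.filter (fun x => (-f) x < 0) = X.filter (fun x => 0 < f x) := by
        apply Finset.filter_congr; intro x _; simp
      have e2 : X.filter (fun x => 0 < (-f) x) = X.filter (fun x => f x < 0) := by
        apply Finset.filter_congr; intro x _; simp
      rw [e1, e2]; exact h
  -- maximizer of g over X
  obtain ⟨xstar, hxstar, hmax⟩ := X.exists_max_image g hXne
  refine ⟨xstar, hxstar, ?_⟩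
  set P : Finset (Fin d → ℝ) := X.filter (fun x => 0 < g x) with hP
  set N : Finset (Fin d → ℝ) := X.filter (fun x => g x < 0) with hN
  set Z : Finset (Fin d → ℝ) := X.filter (fun x => x ∈ V) with hZ
  -- image of P under translation by xstar
  set Q : Finset (Fin d → ℝ) := P.image (fun x => xstar + x) with hQ
  have hQcard : Q.card = P.card :=
    Finset.card_image_of_injective _ (add_right_injective xstar)
  have hQsub : Q ⊆ X + insert xstar T := by
    intro y hy
    obtain ⟨x, hxP, rfl⟩ := Finset.mem_image.mp hy
    exact Finset.mem_add.mpr ⟨x, (Finset.mem_filter.mp hxP).1, xstar,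
      Finset.mem_insert_self _ _, add_comm x xstar⟩
  have hQdisj : Disjoint (X + T) Q := by
    rw [Finset.disjoint_right]
    intro y hyQ hyXT
    obtain ⟨x, hxP, rfl⟩ := Finset.mem_image.mp hyQ
    obtain ⟨x', hx', t, ht, hsum⟩ := Finset.mem_add.mp hyXT
    have hgt : g t = 0 := hgV t (Submodule.subset_span ht)
    have : g x' = g xstar + g x := by
      have := congrArg g hsum
      simpa [map_add, hgt] using this
    have hgx : 0 < g x := (Finset.mem_filter.mp hxP).2
    have := hmax x' hx'
    linarith
  have hXTsub : X + T ⊆ X + insert xstar T :=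
    Finset.add_subset_add_left (Finset.subset_insert _ _)
  have hcard : (X + T).card + P.card ≤ (X + insert xstar T).card := by
    have hunion : (X + T) ∪ Q ⊆ X + insert xstar T := Finset.union_subset hXTsub hQsub
    calc (X + T).card + P.card = ((X + T) ∪ Q).card := by
          rw [Finset.card_union_of_disjoint hQdisj, hQcard]
      _ ≤ (X + insert xstar T).card := Finset.card_le_card hunion
  -- counting: X ⊆ P ∪ N ∪ Z
  have hXsub : X ⊆ P ∪ N ∪ Z := by
    intro x hx
    rcases lt_trichotomy (g x) 0 with h | h | h
    · exact Finset.mem_union_left _ (Finset.mem_union_right _ (Finset.mem_filter.mpr ⟨hx, h⟩))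
    · have hxV : x ∈ V := by
        by_contra hxV
        exact hgS x hx hxV h
      exact Finset.mem_union_right _ (Finset.mem_filter.mpr ⟨hx, hxV⟩)
    · exact Finset.mem_union_left _ (Finset.mem_union_left _ (Finset.mem_filter.mpr ⟨hx, h⟩))
  have hcount : X.card ≤ P.card + N.card + Z.card := by
    calc X.card ≤ (P ∪ N ∪ Z).card := Finset.card_le_card hXsub
      _ ≤ (P ∪ N).card + Z.card := Finset.card_union_le _ _
      _ ≤ P.card + N.card + Z.card := by
          have := Finset.card_union_le P N
          omega
  have hPbound : (1 - γ) * X.card / 2 ≤ (P.card : ℝ) := by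
    have h1 : (X.card : ℝ) ≤ P.card + N.card + Z.card := by exact_mod_cast hcount
    have h2 : (N.card : ℝ) ≤ P.card := by exact_mod_cast hgbal
    have h3 : (Z.card : ℝ) ≤ γ * X.card := hspan
    linarith
  have := hcard
  have hc : ((X + T).card : ℝ) + P.card ≤ ((X + insert xstar T).card : ℝ) := by
    exact_mod_cast this
  linarith
end

section
/- Let d, r, s ∈ ℕ and let X ⊆ ℝ^d be a finite set with rank(X) ≥ r. If X* ⊆ X satisfies rank(X*) < s, then there exists Z ⊆ X \ X* with |Z| ≤ r − s such that |X* + Z| ≥ (r − s)|X*|. -/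
open Classical Pointwise

lemma affRank_mono {d : ℕ} {X Y : Finset (Fin d → ℝ)} (h : X ⊆ Y) :
    affRank X ≤ affRank Y :=
  Submodule.finrank_mono (AffineSubspace.direction_le (affineSpan_mono ℝ (by exact_mod_cast h)))

lemma affRank_insert_le {d : ℕ} (z : Fin d → ℝ) (X : Finset (Fin d → ℝ)) :
    affRank (insert z X) ≤ affRank X + 1 := by
  rcases X.eq_empty_or_nonempty with rfl | ⟨p₀, hp₀⟩
  · have hcoe : ((insert z (∅ : Finset (Fin d → ℝ)) : Finset _) : Set (Fin d → ℝ)) = {z} := by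
      simp
    rw [affRank, hcoe, direction_affineSpan, vectorSpan_singleton]
    simp
  · have hp₀' : p₀ ∈ affineSpan ℝ (X : Set (Fin d → ℝ)) :=
      subset_affineSpan ℝ _ (by exact_mod_cast hp₀)
    unfold affRank
    rw [Finset.coe_insert, ← affineSpan_insert_affineSpan,
      AffineSubspace.direction_affineSpan_insert hp₀']
    refine le_trans (Submodule.finrank_add_le_finrank_add_finrank _ _) ?_
    rw [add_comm]
    gcongr
    refine (finrank_span_le_card _).trans ?_
    simp

lemma affRank_union_le {d : ℕ} (Xstar Z : Finset (Fin d → ℝ)) :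
    affRank (Xstar ∪ Z) ≤ affRank Xstar + Z.card := by
  induction Z using Finset.induction with
  | empty => simp
  | @insert a Z ha ih =>
    rw [Finset.union_insert, Finset.card_insert_of_notMem ha]
    calc affRank (insert a (Xstar ∪ Z)) ≤ affRank (Xstar ∪ Z) + 1 := affRank_insert_le _ _
      _ ≤ affRank Xstar + Z.card + 1 := by omega

lemma key_lemma {d : ℕ} (X Xstar : Finset (Fin d → ℝ)) (hsub : Xstar ⊆ X) :
    ∀ k : ℕ, affRank Xstar + k ≤ affRank X →
    ∃ Z ⊆ X \ Xstar, Z.card ≤ k ∧ k * Xstar.card ≤ (Xstar + Z).card := by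
  intro k
  induction k with
  | zero => exact fun _ => ⟨∅, by simp, by simp, by simp⟩
  | succ k ih =>
    intro hk
    obtain ⟨Z, hZ, hcard, hbig⟩ := ih (by omega)
    have hZcardle : affRank (Xstar ∪ Z) < affRank X := by
      have := affRank_union_le Xstar Z
      omega
    have hex : ∃ z ∈ X, z ∉ affineSpan ℝ ((Xstar ∪ Z : Finset _) : Set (Fin d → ℝ)) := by
      by_contra h
      push_neg at h
      have hle : affineSpan ℝ ((X : Finset _) : Set (Fin d → ℝ)) ≤
          affineSpan ℝ ((Xstar ∪ Z : Finset _) : Set (Fin d → ℝ)) := by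
        rw [affineSpan_le]
        intro x hx
        exact h x (by exact_mod_cast hx)
      have := Submodule.finrank_mono (AffineSubspace.direction_le hle)
      unfold affRank at hZcardle
      omega
    obtain ⟨z, hzX, hz⟩ := hex
    have hzXstar : z ∉ Xstar := fun h =>
      hz (subset_affineSpan ℝ _ (by simp [h]))
    have hzZ : z ∉ Z := fun h =>
      hz (subset_affineSpan ℝ _ (by simp [h]))
    refine ⟨insert z Z, ?_, ?_, ?_⟩
    · intro a ha
      rcases Finset.mem_insert.mp ha with rfl | ha
      · exact Finset.mem_sdiff.mpr ⟨hzX, hzXstar⟩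
      · exact hZ ha
    · rw [Finset.card_insert_of_notMem hzZ]; omega
    · have hsplit : Xstar + insert z Z = (Xstar + {z}) ∪ (Xstar + Z) := by
        rw [Finset.insert_eq, Finset.add_union]
      have hdisj : Disjoint (Xstar + {z}) (Xstar + Z) := by
        rw [Finset.disjoint_left]
        intro a ha1 ha2
        obtain ⟨x, hx, z1, hz1, hax⟩ := Finset.mem_add.mp ha1
        rw [Finset.mem_singleton] at hz1
        rw [hz1] at hax
        obtain ⟨y, hy, z', hz', hay⟩ := Finset.mem_add.mp ha2
        have heq : x + z = y + z' := hax.trans hay.symm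
        have hy' : y ∈ affineSpan ℝ ((Xstar ∪ Z : Finset _) : Set (Fin d → ℝ)) :=
          subset_affineSpan ℝ _ (by simp [hy])
        have hx' : x ∈ affineSpan ℝ ((Xstar ∪ Z : Finset _) : Set (Fin d → ℝ)) :=
          subset_affineSpan ℝ _ (by simp [hx])
        have hz'' : z' ∈ affineSpan ℝ ((Xstar ∪ Z : Finset _) : Set (Fin d → ℝ)) :=
          subset_affineSpan ℝ _ (by simp [hz'])
        have hmem : (1 : ℝ) • (y -ᵥ x) +ᵥ z' ∈
            affineSpan ℝ ((Xstar ∪ Z : Finset _) : Set (Fin d → ℝ)) :=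
          AffineSubspace.smul_vsub_vadd_mem _ 1 hy' hx' hz''
        simp only [vsub_eq_sub, vadd_eq_add, one_smul] at hmem
        have hzeq : z = y - x + z' := by linear_combination heq
        rw [← hzeq] at hmem
        exact hz hmem
      have hcard1 : (Xstar + ({z} : Finset (Fin d → ℝ))).card = Xstar.card := by
        rw [Finset.add_singleton]
        exact Finset.card_image_of_injective _ (add_left_injective z)
      rw [hsplit, Finset.card_union_of_disjoint hdisj, hcard1]
      have : (k + 1) * Xstar.card = Xstar.card + k * Xstar.card := by ring
      omega

/-- If `rank(X) ≥ r` and `X* ⊆ X` has `rank(X*) < s`, then there is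
`Z ⊆ X \ X*` with `|Z| ≤ r − s` and `|X* + Z| ≥ (r − s)|X*|`. -/
theorem disjoint_translates (d r s : ℕ) (X Xstar : Finset (Fin d → ℝ))
    (hX : r ≤ affRank X) (hsub : Xstar ⊆ X) (hXstar : affRank Xstar < s) :
    ∃ Z ⊆ X \ Xstar, Z.card ≤ r - s ∧ (r - s) * Xstar.card ≤ (Xstar + Z).card := by
  have hmono := affRank_mono hsub
  exact key_lemma X Xstar hsub (r - s) (by omega)
end

section
/- Let U ⊆ ℝ^d be a finite set and f : U → ℝ≥0. Then the sum over w ∈ U + U of max{f(u) : u ∈ U, w − u ∈ U} is at least ((rank(U) + 1)/2) · Σ_{u ∈ U} f(u). -/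
open Classical Pointwise

/-!
Induction on `U`. Remove from `U` a point `v` exposed by a linear functional `ψ` (a point of
maximal Euclidean norm) and put `U' = U \ {v}`. The sums `v + u` (`u ∈ U`) outside `U' + U'` are
new in `U + U`, and the weight of each of them is at least `f v` and at least `(f v + f u) / 2`.

If `v` lies in the affine span of `U'`, the rank does not change and there are at least
`rank U + 1` new sums: `2v`, and `v + u` for each `u` such that `u - v` is not a sum of two
elements of `U' - v`. As `ψ > 0` on `U' - v`, these indecomposable elements generate `U' - v`
additively, so there are at least `rank U` of them. Otherwise the rank grows by at most one, all
the sums `v + u` are new, and the weights `(f v + f u) / 2` pay for the extra half of `∑ f`.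
-/

open Module Finset

theorem Finset.coe_subset_closure_filter_notMem_add {M α : Type*} [AddCommMonoid M]
    [DecidableEq M] [AddCommMonoid α] [LinearOrder α] [IsOrderedCancelAddMonoid α] (ψ : M →+ α)
    {P : Finset M} (hP : ∀ p ∈ P, 0 < ψ p) :
    (P : Set M) ⊆ AddSubmonoid.closure (({p ∈ P | p ∉ P + P} : Finset M) : Set M) := by
  set S := AddSubmonoid.closure (({p ∈ P | p ∉ P + P} : Finset M) : Set M)
  intro p hp
  by_contra hpS
  obtain ⟨m, hm, hmin⟩ := {p ∈ P | p ∉ S}.exists_min_image ψ ⟨p, mem_filter.2 ⟨hp, hpS⟩⟩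
  rw [mem_filter] at hm
  have hmP : m ∈ P + P := by
    by_contra hmP
    exact hm.2 (AddSubmonoid.subset_closure (mem_filter.2 ⟨hm.1, hmP⟩))
  obtain ⟨a, ha, b, hb, rfl⟩ := mem_add.1 hmP
  have mem_of_lt {c : M} (hc : c ∈ P) (hlt : ψ c < ψ (a + b)) : c ∈ S := by
    by_contra hcS
    exact (hmin c (mem_filter.2 ⟨hc, hcS⟩)).not_gt hlt
  refine hm.2 (add_mem (mem_of_lt ha ?_) (mem_of_lt hb ?_)) <;> rw [map_add]
  · exact lt_add_of_pos_right _ (hP b hb)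
  · exact lt_add_of_pos_left _ (hP a ha)

theorem finrank_vectorSpan_insert_le_card_filter {k E α : Type*} [DivisionRing k]
    [AddCommGroup E] [DecidableEq E] [Module k E] [AddCommMonoid α] [LinearOrder α]
    [IsOrderedCancelAddMonoid α] (ψ : E →+ α) {s : Finset E} {v : E} (hψ : ∀ u ∈ s, 0 < ψ (u - v)) :
    finrank k (vectorSpan k (insert v (s : Set E))) ≤ #{u ∈ s | v + u ∉ s + s} := by
  set P := s.image (· - v)
  have hP : ∀ p ∈ P, 0 < ψ p := forall_mem_image.2 hψ
  have hsub : {p ∈ P | p ∉ P + P} ⊆ {u ∈ s | v + u ∉ s + s}.image (· - v) := by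
    intro p
    simp only [P, mem_filter, mem_image, mem_add]
    rintro ⟨⟨u, hu, rfl⟩, hdec⟩
    refine ⟨u, ⟨hu, ?_⟩, rfl⟩
    rintro ⟨a, ha, b, hb, hab⟩
    exact hdec ⟨a - v, ⟨a, ha, rfl⟩, b - v, ⟨b, hb, rfl⟩,
      by rw [sub_add_sub_comm, hab, add_sub_add_left_eq_sub]⟩
  calc finrank k (vectorSpan k (insert v (s : Set E)))
      ≤ finrank k (Submodule.span k (({p ∈ P | p ∉ P + P} : Finset E) : Set E)) := by
        refine Submodule.finrank_mono ?_
        rw [vectorSpan_eq_span_vsub_set_right k (Set.mem_insert v _), Submodule.span_le]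
        rintro _ ⟨u, hu | hu, rfl⟩
        · simp [hu]
        · exact Submodule.closure_subset_span
            (coe_subset_closure_filter_notMem_add ψ hP (mem_image_of_mem _ hu))
      _ ≤ #{p ∈ P | p ∉ P + P} := finrank_span_finset_le_card (R := k) _
      _ ≤ #{u ∈ s | v + u ∉ s + s} := (card_le_card hsub).trans card_image_le

theorem add_notMem_add_of_notMem_affineSpan {k E : Type*} [Field k] [CharZero k] [AddCommGroup E]
    [DecidableEq E] [Module k E] {s : Finset E} {v u : E} (hv : v ∉ affineSpan k (s : Set E))
    (hu : u ∈ insert v s) : v + u ∉ s + s := by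
  rw [mem_add]
  rintro ⟨a, ha, b, hb, hab⟩
  have ha' := mem_affineSpan k (mem_coe.2 ha)
  have hb' := mem_affineSpan k (mem_coe.2 hb)
  apply hv
  rcases mem_insert.1 hu with rfl | hu
  · have hmid : (2⁻¹ : k) • (a -ᵥ b) +ᵥ b = u := by
      simp only [vsub_eq_sub, vadd_eq_add]
      linear_combination (norm := module) (2⁻¹ : k) • hab
    rw [← hmid]
    exact AffineSubspace.vadd_mem_of_mem_direction
      (Submodule.smul_mem _ _ (AffineSubspace.vsub_mem_direction ha' hb')) hb'
  · have hv_eq : (a -ᵥ u) +ᵥ b = v := by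
      simp only [vsub_eq_sub, vadd_eq_add]
      linear_combination (norm := module) hab
    rw [← hv_eq]
    exact AffineSubspace.vadd_mem_of_mem_direction
      (AffineSubspace.vsub_mem_direction ha' (mem_affineSpan k (mem_coe.2 hu))) hb'

theorem Finset.finrank_vectorSpan_lt_card {k E : Type*} [DivisionRing k] [AddCommGroup E]
    [Module k E] {s : Finset E} (hs : s.Nonempty) : finrank k (vectorSpan k (s : Set E)) < #s := by
  obtain ⟨n, hn⟩ := Nat.exists_eq_add_one.2 hs.card_pos
  have := finrank_vectorSpan_image_finset_le k id s hn
  rw [show s.image id = s from image_id] at this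
  omega

theorem Finset.exists_exposed_mem {ι 𝕜 : Type*} [Fintype ι] [Field 𝕜] [LinearOrder 𝕜]
    [IsStrictOrderedRing 𝕜] {U : Finset (ι → 𝕜)} (hU : U.Nonempty) :
    ∃ v ∈ U, ∃ ψ : (ι → 𝕜) →ₗ[𝕜] 𝕜, ∀ u ∈ U, u ≠ v → 0 < ψ (u - v) := by
  obtain ⟨v, hv, hmax⟩ := U.exists_max_image (fun u => u ⬝ᵥ u) hU
  refine ⟨v, hv, dotProductBilin 𝕜 𝕜 (-v), fun u hu huv => ?_⟩
  have hpos : 0 < (u - v) ⬝ᵥ (u - v) :=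
    lt_of_le_of_ne (sum_nonneg fun i _ => mul_self_nonneg _)
      (Ne.symm (dotProduct_self_eq_zero.not.2 (sub_ne_zero.2 huv)))
  have hle := hmax u hu
  simp only [dotProductBilin_apply_apply, neg_dotProduct, dotProduct_sub,
    sub_dotProduct] at hpos ⊢
  rw [dotProduct_comm v u] at hpos ⊢
  linarith

section SumsetWeight

variable {E : Type*} [AddCommGroup E] [DecidableEq E]

noncomputable def maxSummandWeight (U : Finset E) (f : E → NNReal) (w : E) : NNReal :=
  {u ∈ U | w - u ∈ U}.sup f

noncomputable def sumsetWeight (U : Finset E) (f : E → NNReal) : ℝ :=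
  ∑ w ∈ U + U, (maxSummandWeight U f w : ℝ)

variable {U U' : Finset E} {f : E → NNReal} {u u' v : E}

theorem maxSummandWeight_mono (h : U' ⊆ U) (w : E) :
    maxSummandWeight U' f w ≤ maxSummandWeight U f w :=
  sup_mono fun x hx => by
    rw [mem_filter] at hx ⊢
    exact ⟨h hx.1, h hx.2⟩

theorem le_maxSummandWeight_add (hu : u ∈ U) (hu' : u' ∈ U) :
    f u ≤ maxSummandWeight U f (u + u') :=
  le_sup (mem_filter.2 ⟨hu, by rwa [add_sub_cancel_left]⟩)

theorem sumsetWeight_add_sum_le (hU' : U' ⊆ U) (hv : v ∈ U) :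
    sumsetWeight U' f + ∑ u ∈ U with v + u ∉ U' + U', (maxSummandWeight U f (v + u) : ℝ) ≤
      sumsetWeight U f := by
  let N := {u ∈ U | v + u ∉ U' + U'}.image (v + ·)
  have hN : ∑ u ∈ U with v + u ∉ U' + U', (maxSummandWeight U f (v + u) : ℝ) =
      ∑ w ∈ N, (maxSummandWeight U f w : ℝ) := by
    rw [sum_image fun _ _ _ _ => add_left_cancel]
  have hdisj : Disjoint (U' + U') N := by
    rw [disjoint_right]
    rintro _ hw
    obtain ⟨u, hu, rfl⟩ := mem_image.1 hw
    exact (mem_filter.1 hu).2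
  have hsub : U' + U' ∪ N ⊆ U + U := by
    refine union_subset (add_subset_add hU' hU') fun w hw => ?_
    obtain ⟨u, hu, rfl⟩ := mem_image.1 hw
    exact add_mem_add hv (mem_filter.1 hu).1
  calc sumsetWeight U' f + ∑ u ∈ U with v + u ∉ U' + U', (maxSummandWeight U f (v + u) : ℝ)
      ≤ ∑ w ∈ U' + U' ∪ N, (maxSummandWeight U f w : ℝ) := by
        rw [sum_union hdisj, hN, sumsetWeight]
        gcongr with w
        exact maxSummandWeight_mono hU' w
    _ ≤ sumsetWeight U f :=
        sum_le_sum_of_subset_of_nonneg hsub fun _ _ _ => NNReal.coe_nonneg _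

theorem sumsetWeight_add_mul_le_sumsetWeight_insert {k α : Type*} [DivisionRing k] [Module k E]
    [AddCommMonoid α] [LinearOrder α] [IsOrderedCancelAddMonoid α] (ψ : E →+ α)
    (hψ : ∀ u ∈ U', 0 < ψ (u - v)) :
    sumsetWeight U' f + (finrank k (vectorSpan k (insert v (U' : Set E))) + 1) * (f v : ℝ) ≤
      sumsetWeight (insert v U') f := by
  have hvU' : v ∉ U' := fun hv => by simpa using hψ v hv
  have hvv : v + v ∉ U' + U' := by
    rw [mem_add]
    rintro ⟨a, ha, b, hb, hab⟩
    have h := add_pos (hψ a ha) (hψ b hb)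
    rw [← map_add, sub_add_sub_comm, hab, sub_self, map_zero] at h
    exact h.false
  have hcard : finrank k (vectorSpan k (insert v (U' : Set E))) + 1 ≤
      #{u ∈ insert v U' | v + u ∉ U' + U'} := by
    rw [filter_insert, if_pos hvv, card_insert_of_notMem fun h => hvU' (mem_filter.1 h).1]
    exact Nat.add_le_add_right (finrank_vectorSpan_insert_le_card_filter ψ hψ) 1
  calc sumsetWeight U' f + (finrank k (vectorSpan k (insert v (U' : Set E))) + 1) * (f v : ℝ)
      ≤ sumsetWeight U' f + #{u ∈ insert v U' | v + u ∉ U' + U'} • (f v : ℝ) := by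
        rw [nsmul_eq_mul]
        gcongr
        exact_mod_cast hcard
    _ ≤ sumsetWeight U' f + ∑ u ∈ insert v U' with v + u ∉ U' + U',
          (maxSummandWeight (insert v U') f (v + u) : ℝ) := by
        gcongr
        refine card_nsmul_le_sum _ _ _ fun u hu => ?_
        exact_mod_cast le_maxSummandWeight_add (mem_insert_self v U') (mem_filter.1 hu).1
    _ ≤ sumsetWeight (insert v U') f :=
        sumsetWeight_add_sum_le (subset_insert v U') (mem_insert_self v U')

theorem sumsetWeight_add_half_le_sumsetWeight_insert {k : Type*} [Field k] [CharZero k]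
    [Module k E] (hv : v ∉ affineSpan k (U' : Set E)) :
    sumsetWeight U' f + ((#U' + 2) * (f v : ℝ) + ∑ u ∈ U', (f u : ℝ)) / 2 ≤
      sumsetWeight (insert v U') f := by
  have hvU' : v ∉ U' := fun h => hv (mem_affineSpan k (mem_coe.2 h))
  have hall : {u ∈ insert v U' | v + u ∉ U' + U'} = insert v U' :=
    filter_true_of_mem fun u hu => add_notMem_add_of_notMem_affineSpan hv hu
  calc sumsetWeight U' f + ((#U' + 2) * (f v : ℝ) + ∑ u ∈ U', (f u : ℝ)) / 2
      = sumsetWeight U' f + ∑ u ∈ insert v U', ((f v : ℝ) + f u) / 2 := by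
        rw [← sum_div, sum_add_distrib, sum_const, sum_insert hvU', card_insert_of_notMem hvU',
          nsmul_eq_mul]
        push_cast
        ring
    _ ≤ sumsetWeight U' f + ∑ u ∈ insert v U' with v + u ∉ U' + U',
          (maxSummandWeight (insert v U') f (v + u) : ℝ) := by
        rw [hall]
        gcongr with u hu
        have h₁ : (f v : ℝ) ≤ maxSummandWeight (insert v U') f (v + u) := by
          exact_mod_cast le_maxSummandWeight_add (mem_insert_self v _) hu
        have h₂ : (f u : ℝ) ≤ maxSummandWeight (insert v U') f (v + u) := by
          rw [add_comm v u]
          exact_mod_cast le_maxSummandWeight_add hu (mem_insert_self v _)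
        linarith
    _ ≤ sumsetWeight (insert v U') f :=
        sumsetWeight_add_sum_le (subset_insert v U') (mem_insert_self v U')

end SumsetWeight

theorem le_sumsetWeight {ι : Type*} [Fintype ι] (U : Finset (ι → ℝ)) (f : (ι → ℝ) → NNReal) :
    ((finrank ℝ (vectorSpan ℝ (U : Set (ι → ℝ))) : ℝ) + 1) / 2 * ∑ u ∈ U, (f u : ℝ) ≤
      sumsetWeight U f := by
  induction U using Finset.strongInduction with
  | H U ih =>
    rcases U.eq_empty_or_nonempty with rfl | hU
    · simp [sumsetWeight]
    obtain ⟨v, hv, ψ, hψ⟩ := exists_exposed_mem hU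
    obtain ⟨U', hvU', rfl⟩ : ∃ U', v ∉ U' ∧ U = insert v U' :=
      ⟨U.erase v, notMem_erase v U, (insert_erase hv).symm⟩
    have hIH := ih U' (ssubset_insert hvU')
    rw [sum_insert hvU', coe_insert]
    have hfv : 0 ≤ (f v : ℝ) := NNReal.coe_nonneg _
    have hF : 0 ≤ ∑ u ∈ U', (f u : ℝ) := sum_nonneg fun _ _ => NNReal.coe_nonneg _
    by_cases hspan : v ∈ affineSpan ℝ (U' : Set (ι → ℝ))
    · have hstep := sumsetWeight_add_mul_le_sumsetWeight_insert (k := ℝ) (f := f)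
        ψ.toAddMonoidHom fun u hu => hψ u (mem_insert_of_mem hu) (ne_of_mem_of_not_mem hu hvU')
      rw [vectorSpan_insert_eq_vectorSpan hspan] at hstep ⊢
      linarith [mul_nonneg (Nat.cast_nonneg (finrank ℝ (vectorSpan ℝ (U' : Set (ι → ℝ))))) hfv]
    · have hstep := sumsetWeight_add_half_le_sumsetWeight_insert (f := f) hspan
      have hr : (finrank ℝ (vectorSpan ℝ (insert v (U' : Set (ι → ℝ)))) : ℝ) ≤
          finrank ℝ (vectorSpan ℝ (U' : Set (ι → ℝ))) + 1 := by
        exact_mod_cast finrank_vectorSpan_insert_le_set ℝ _ v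
      have hcard : (finrank ℝ (vectorSpan ℝ (insert v (U' : Set (ι → ℝ)))) : ℝ) ≤ #U' := by
        have := finrank_vectorSpan_lt_card (k := ℝ) (insert_nonempty v U')
        rw [coe_insert, card_insert_of_notMem hvU'] at this
        exact_mod_cast Nat.lt_succ_iff.1 this
      linarith [mul_le_mul_of_nonneg_right hr hF, mul_le_mul_of_nonneg_right hcard hfv]

/-- Weighted Freĭman lemma: for finite `U ⊆ ℝ^d` and `f : U → ℝ≥0`,
`∑_{w ∈ U+U} max{f(u) : u ∈ U, w − u ∈ U} ≥ ((rank U + 1)/2) ∑_{u ∈ U} f(u)`. -/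
theorem weighted_freiman (d : ℕ) (U : Finset (Fin d → ℝ)) (f : (Fin d → ℝ) → NNReal) :
    ((affRank U : ℝ) + 1) / 2 * ∑ u ∈ U, (f u : ℝ) ≤
      ∑ w ∈ U + U, (((U.filter fun u => w - u ∈ U).sup f : NNReal) : ℝ) := by
  rw [affRank, direction_affineSpan]
  exact le_sumsetWeight U f
end

section
/- Let U ⊆ ℝ^d be a finite set, let v ∈ U be a vertex (extreme point) of the convex hull of U, and let U' = U \ {v}. If U' is nonempty, then there exists an affine hyperplane H such that v and U' \ H lie strictly on opposite sides of H, and |H ∩ U'| ≥ rank(U'). -/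
open Classical

/-!
Since `v` is not in the convex hull of `S = U \ {v}`, some hyperplane `φ = c` has `v` strictly
below it and `S` weakly above it. Among all such hyperplanes take one touching `S` in a largest
set `F`. If some `x ∈ S` lay outside the affine span of `F ∪ {v}`, a linear form vanishing on the
direction of that span but negative at `x - v` would let us tilt the hyperplane about it, keeping
`v` below and `F` on it, until it also meets a new point of `S`. Hence `S` lies in the affine span
of the `|F| + 1` points `F ∪ {v}`, whose dimension is at most `|F|`.
-/

open Module

theorem exists_add_mul_nonneg_and_eq_zero {ι : Type*} (S : Finset ι) (a b : ι → ℝ)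
    (ha : ∀ x ∈ S, 0 ≤ a x) (hb : ∃ x ∈ S, b x < 0) :
    ∃ t : ℝ, (∀ x ∈ S, 0 ≤ a x + t * b x) ∧ ∃ y ∈ S, b y < 0 ∧ a y + t * b y = 0 := by
  obtain ⟨x₁, hx₁S, hx₁⟩ := hb
  obtain ⟨y, hyT, hy⟩ := (S.filter (b · < 0)).exists_min_image (fun x => a x / -b x)
    ⟨x₁, Finset.mem_filter.mpr ⟨hx₁S, hx₁⟩⟩
  obtain ⟨hyS, hby⟩ := Finset.mem_filter.mp hyT
  have hby' : 0 < -b y := neg_pos.mpr hby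
  refine ⟨a y / -b y, fun x hx => ?_, y, hyS, hby, by field_simp [hby.ne]; ring⟩
  by_cases hbx : b x < 0
  · have hyx := hy x (Finset.mem_filter.mpr ⟨hx, hbx⟩)
    rw [div_le_div_iff₀ hby' (neg_pos.mpr hbx)] at hyx
    have : a y / -b y * b x = -(a y * -b x / -b y) := by ring
    rw [this, ← sub_eq_add_neg, sub_nonneg, div_le_iff₀ hby']
    exact hyx
  · exact add_nonneg (ha x hx) (mul_nonneg (div_nonneg (ha y hyS) hby'.le) (not_lt.mp hbx))

theorem Submodule.exists_dual_neg_of_notMem {E : Type*} [AddCommGroup E] [Module ℝ E]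
    {W : Submodule ℝ E} {q : E} (hq : q ∉ W) :
    ∃ g : E →ₗ[ℝ] ℝ, g q < 0 ∧ ∀ w ∈ W, g w = 0 := by
  obtain ⟨f, hfq, hfW⟩ := W.exists_dual_map_eq_bot_of_notMem hq inferInstance
  refine ⟨(-f q) • f, by simpa using mul_self_pos.mpr hfq, fun w hw => ?_⟩
  have : f w = 0 := (Submodule.mem_bot ℝ).mp (hfW ▸ Submodule.mem_map_of_mem hw)
  simp [this]

section Separation

variable {E : Type*} [AddCommGroup E] [Module ℝ E]

def SeparatesPoint (φ : E →ₗ[ℝ] ℝ) (c : ℝ) (v : E) (S : Finset E) : Prop :=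
  φ v < c ∧ ∀ x ∈ S, c ≤ φ x

noncomputable def contactSet (φ : E →ₗ[ℝ] ℝ) (c : ℝ) (S : Finset E) : Finset E :=
  S.filter fun x => φ x = c

theorem SeparatesPoint.exists_contactSet_ssuperset {φ : E →ₗ[ℝ] ℝ} {c : ℝ} {v : E}
    {S : Finset E} (h : SeparatesPoint φ c v S) {x₁ : E} (hx₁S : x₁ ∈ S)
    (hx₁ : x₁ ∉ affineSpan ℝ (insert v (contactSet φ c S : Set E))) :
    ∃ φ' c', SeparatesPoint φ' c' v S ∧ contactSet φ c S ⊂ contactSet φ' c' S := by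
  set A := affineSpan ℝ (insert v (contactSet φ c S : Set E))
  have hvA : v ∈ A := mem_affineSpan ℝ (Set.mem_insert _ _)
  obtain ⟨g, hgx₁, hgA⟩ := Submodule.exists_dual_neg_of_notMem (W := A.direction)
    (q := x₁ - v) fun hmem => hx₁ ((AffineSubspace.vsub_right_mem_direction_iff_mem hvA x₁).mp hmem)
  have hg_contact : ∀ x ∈ contactSet φ c S, g (x - v) = 0 := fun x hx =>
    hgA _ (AffineSubspace.vsub_mem_direction
      (mem_affineSpan ℝ (Set.mem_insert_of_mem _ (Finset.mem_coe.mpr hx))) hvA)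
  -- `g (· - v)` vanishes on `v` and on the contact set, so tilting by it moves neither.
  obtain ⟨t, ht, y, hyS, hgy, hty⟩ := exists_add_mul_nonneg_and_eq_zero S
    (fun x => φ x - c) (fun x => g (x - v)) (fun x hx => sub_nonneg.mpr (h.2 x hx)) ⟨x₁, hx₁S, hgx₁⟩
  have tilt : ∀ x, (φ + t • g) x - (c + t * g v) = φ x - c + t * g (x - v) := fun x => by
    simp only [LinearMap.add_apply, LinearMap.smul_apply, smul_eq_mul, map_sub]
    ring
  refine ⟨φ + t • g, c + t * g v, ⟨?_, fun x hx => ?_⟩, ?_⟩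
  · have := tilt v
    simp only [sub_self, map_zero, mul_zero, add_zero] at this
    linarith [h.1]
  · linarith [tilt x, ht x hx]
  · refine (Finset.ssubset_iff_of_subset fun x hx => ?_).mpr
      ⟨y, Finset.mem_filter.mpr ⟨hyS, by linarith [tilt y]⟩, fun hy => hgy.ne (hg_contact y hy)⟩
    obtain ⟨hxS, hxc⟩ := Finset.mem_filter.mp hx
    have := tilt x
    rw [hg_contact x hx, mul_zero] at this
    exact Finset.mem_filter.mpr ⟨hxS, by linarith⟩

theorem SeparatesPoint.exists_subset_affineSpan_contactSet {φ : E →ₗ[ℝ] ℝ} {c : ℝ} {v : E}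
    {S : Finset E} (h : SeparatesPoint φ c v S) :
    ∃ φ' c', SeparatesPoint φ' c' v S ∧
      (S : Set E) ⊆ affineSpan ℝ (insert v (contactSet φ' c' S : Set E)) := by
  set C := S.powerset.filter fun F => ∃ φ' c', SeparatesPoint φ' c' v S ∧ contactSet φ' c' S = F
  have hC : contactSet φ c S ∈ C :=
    Finset.mem_filter.mpr ⟨Finset.mem_powerset.mpr (Finset.filter_subset _ _), φ, c, h, rfl⟩
  obtain ⟨F, hFC, hFmax⟩ := C.exists_max_image Finset.card ⟨_, hC⟩
  obtain ⟨φ₀, c₀, h₀, rfl⟩ := (Finset.mem_filter.mp hFC).2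
  refine ⟨φ₀, c₀, h₀, fun x hx => ?_⟩
  by_contra hxA
  obtain ⟨φ', c', h', hlt⟩ := h₀.exists_contactSet_ssuperset hx hxA
  have hC' : contactSet φ' c' S ∈ C :=
    Finset.mem_filter.mpr ⟨Finset.mem_powerset.mpr (Finset.filter_subset _ _), φ', c', h', rfl⟩
  exact (hFmax _ hC').not_gt (Finset.card_lt_card hlt)

end Separation

theorem finrank_vectorSpan_le_card_of_subset_affineSpan_insert {E : Type*} [AddCommGroup E]
    [Module ℝ E] {S F : Finset E} {v : E}
    (hS : (S : Set E) ⊆ affineSpan ℝ (insert v (F : Set E))) :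
    finrank ℝ (vectorSpan ℝ (S : Set E)) ≤ F.card := by
  have hle : vectorSpan ℝ (S : Set E) ≤ vectorSpan ℝ (insert v (F : Set E)) := by
    simpa only [direction_affineSpan] using AffineSubspace.direction_le (affineSpan_le.mpr hS)
  have hcard : (insert v F).card = ((insert v F).card - 1) + 1 :=
    (Nat.sub_add_cancel (Finset.card_pos.mpr (Finset.insert_nonempty v F))).symm
  have hrank := finrank_vectorSpan_image_finset_le ℝ id (insert v F) hcard
  rw [Finset.image_id, Finset.coe_insert] at hrank
  have := finiteDimensional_vectorSpan_of_finite ℝ (F.finite_toSet.insert v)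
  calc finrank ℝ (vectorSpan ℝ (S : Set E))
      ≤ finrank ℝ (vectorSpan ℝ (insert v (F : Set E))) := Submodule.finrank_mono hle
    _ ≤ (insert v F).card - 1 := hrank
    _ ≤ F.card := by have := Finset.card_insert_le v F; omega

theorem exists_separatesPoint_of_notMem_convexHull {E : Type*} [AddCommGroup E] [Module ℝ E]
    [TopologicalSpace E] [IsTopologicalAddGroup E] [ContinuousSMul ℝ E] [LocallyConvexSpace ℝ E]
    [T2Space E] {S : Finset E} {v : E} (hv : v ∉ convexHull ℝ (S : Set E)) :
    ∃ φ c, SeparatesPoint φ c v S := by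
  obtain ⟨f, u, hfv, hfS⟩ := geometric_hahn_banach_point_closed (convex_convexHull ℝ _)
    (S.finite_toSet.isClosed_convexHull (𝕜 := ℝ)) hv
  exact ⟨f, u, hfv, fun x hx => (hfS x (subset_convexHull ℝ _ hx)).le⟩

theorem notMem_convexHull_sdiff_of_mem_extremePoints_convexHull {E : Type*} [AddCommGroup E]
    [Module ℝ E] {A : Set E} {v : E} (hv : v ∈ (convexHull ℝ A).extremePoints ℝ) :
    v ∉ convexHull ℝ (A \ {v}) := fun hmem =>
  ((convex_convexHull ℝ A).mem_extremePoints_iff_mem_sdiff_convexHull_sdiff.mp hv).2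
    (convexHull_mono (Set.sdiff_subset_sdiff_left (subset_convexHull ℝ A)) hmem)

theorem facet_hyperplane_general (d : ℕ) (U : Finset (Fin d → ℝ)) (v : Fin d → ℝ)
    (hext : v ∈ Set.extremePoints ℝ (convexHull ℝ (U : Set (Fin d → ℝ))))
    (hU' : (U.erase v).Nonempty) :
    ∃ (φ : (Fin d → ℝ) →ₗ[ℝ] ℝ) (c : ℝ), φ ≠ 0 ∧ φ v < c ∧
      (∀ x ∈ U.erase v, φ x ≠ c → c < φ x) ∧
      affRank (U.erase v) ≤ ((U.erase v).filter fun x => φ x = c).card := by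
  have hv : v ∉ convexHull ℝ (U.erase v : Set (Fin d → ℝ)) := by
    simpa using notMem_convexHull_sdiff_of_mem_extremePoints_convexHull hext
  obtain ⟨φ₀, c₀, hsep₀⟩ := exists_separatesPoint_of_notMem_convexHull hv
  obtain ⟨φ, c, ⟨hφv, hφS⟩, hspan⟩ := hsep₀.exists_subset_affineSpan_contactSet
  obtain ⟨z, hz⟩ := hU'
  refine ⟨φ, c, ?_, hφv, fun x hx hne => (hφS x hx).lt_of_ne' hne, ?_⟩
  · rintro rfl
    exact (hφv.trans_le (hφS z hz)).false
  · rw [affRank, direction_affineSpan]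
    exact finrank_vectorSpan_le_card_of_subset_affineSpan_insert hspan

/-- If `v` is a vertex (extreme point) of `conv(U)` and `U' = U \ {v}` is nonempty,
then there is an affine hyperplane `H = {x : φ x = c}` (with `φ` a nonzero linear
functional) such that `v` and `U' \ H` lie strictly on opposite sides of `H`,
and `|H ∩ U'| ≥ rank(U')`. -/
theorem facet_hyperplane (d : ℕ) (U : Finset (Fin d → ℝ)) (v : Fin d → ℝ)
    (hv : v ∈ U)
    (hext : v ∈ Set.extremePoints ℝ (convexHull ℝ (U : Set (Fin d → ℝ))))
    (hU' : (U.erase v).Nonempty) :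
    ∃ (φ : (Fin d → ℝ) →ₗ[ℝ] ℝ) (c : ℝ), φ ≠ 0 ∧ φ v < c ∧
      (∀ x ∈ U.erase v, φ x ≠ c → c < φ x) ∧
      affRank (U.erase v) ≤ ((U.erase v).filter fun x => φ x = c).card :=
  facet_hyperplane_general d U v hext hU'
end

section
/- Let G be a graph on k vertices. If every maximal independent set of G has at least t vertices, then G has at most k(k − t)/2 edges. -/
open Classical

/-- If every maximal independent set of a graph on `k` vertices has at least `t`
vertices, then the graph has at most `k(k − t)/2` edges. -/
theorem edges_bound_of_large_maximal_indep (V : Type*) [Fintype V] [DecidableEq V]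
    (G : SimpleGraph V) [DecidableRel G.Adj] (k t : ℕ)
    (hk : Fintype.card V = k)
    (h : ∀ s : Finset V,
      (∀ a ∈ s, ∀ b ∈ s, a ≠ b → ¬ G.Adj a b) →
      (∀ s' : Finset V, (∀ a ∈ s', ∀ b ∈ s', a ≠ b → ¬ G.Adj a b) → s ⊆ s' → s' = s) →
      t ≤ s.card) :
    (G.edgeFinset.card : ℝ) ≤ k * ((k : ℝ) - t) / 2 := by
  have key : ∀ v : V, G.degree v + t ≤ k := by
    intro v
    -- the family of independent sets containing v
    classical
    set 𝒮 : Finset (Finset V) :=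
      Finset.univ.filter (fun s : Finset V =>
        v ∈ s ∧ ∀ a ∈ s, ∀ b ∈ s, a ≠ b → ¬ G.Adj a b) with h𝒮
    have hmem : ∀ s, s ∈ 𝒮 ↔ v ∈ s ∧ ∀ a ∈ s, ∀ b ∈ s, a ≠ b → ¬ G.Adj a b := by
      intro s; simp [h𝒮]
    have hne : 𝒮.Nonempty := by
      refine ⟨{v}, (hmem _).2 ⟨Finset.mem_singleton_self v, ?_⟩⟩
      intro a ha b hb hab
      simp only [Finset.mem_singleton] at ha hb
      exact absurd (ha.trans hb.symm) hab
    obtain ⟨S, hS, hmax⟩ := 𝒮.exists_max_image Finset.card hne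
    obtain ⟨hvS, hindep⟩ := (hmem S).1 hS
    have hSmax : ∀ s' : Finset V,
        (∀ a ∈ s', ∀ b ∈ s', a ≠ b → ¬ G.Adj a b) → S ⊆ s' → s' = S := by
      intro s' hind' hsub
      have hs' : s' ∈ 𝒮 := (hmem s').2 ⟨hsub hvS, hind'⟩
      exact (Finset.eq_of_subset_of_card_le hsub (hmax _ hs')).symm
    have htS : t ≤ S.card := h S hindep hSmax
    have hdisj : Disjoint (G.neighborFinset v) S := by
      rw [Finset.disjoint_left]
      intro u hu huS
      rw [SimpleGraph.mem_neighborFinset] at hu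
      exact hindep v hvS u huS hu.ne hu
    have hcard : G.degree v + S.card ≤ k := by
      have := Finset.card_le_card (Finset.subset_univ (G.neighborFinset v ∪ S))
      rw [Finset.card_union_of_disjoint hdisj, Finset.card_univ, hk] at this
      exact this
    omega
  have hsum : ∑ v : V, G.degree v = 2 * G.edgeFinset.card :=
    G.sum_degrees_eq_twice_card_edges
  have hsum2 : 2 * G.edgeFinset.card + k * t ≤ k * k := by
    calc 2 * G.edgeFinset.card + k * t
        = ∑ v : V, (G.degree v + t) := by
          rw [Finset.sum_add_distrib, hsum, Finset.sum_const, Finset.card_univ, hk,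
            smul_eq_mul]
      _ ≤ ∑ _v : V, k := Finset.sum_le_sum (fun v _ => key v)
      _ = k * k := by rw [Finset.sum_const, Finset.card_univ, hk, smul_eq_mul]
  have := (Nat.cast_le (α := ℝ)).2 hsum2
  push_cast at this
  linarith
end

section
/- Let n be prime and k ∈ ℕ with k⁴ ≤ δ·n for δ ∈ (0,1). Then the number of k-element subsets X of ℤ/nℤ with |X +̂ X| = k(k−1)/2 is at least (1 − δ)·C(n, k), where X +̂ X = {x₁ + x₂ : x₁, x₂ ∈ X, x₁ ≠ x₂} denotes the restricted sumset. -/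
/-!
If two different pairs `{a, b} ≠ {c, d}` in `X` have `a + b = c + d`, the pairs are disjoint,
so `X` contains the four-element set `{a, b, c, a + b - c}`. There are at most `n³` triples
`(a, b, c)` and a four-element set lies in `C(n - 4, k - 4)` of the `k`-subsets, so at most
`n³ C(n - 4, k - 4) ≤ (k⁴ / n) C(n, k) ≤ δ C(n, k)` of them have a repeated pair sum; every
other `k`-subset has `C(k, 2)` distinct pair sums.
-/

open Classical

open Finset

theorem Nat.descFactorial_mul_pow_le_descFactorial_mul_pow {k n : ℕ} (hkn : k ≤ n) (r : ℕ) :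
    k.descFactorial r * n ^ r ≤ n.descFactorial r * k ^ r := by
  induction r with
  | zero => simp
  | succ r ih =>
    have step : (k - r) * n ≤ (n - r) * k := by
      rw [Nat.sub_mul, Nat.sub_mul, mul_comm n k]
      exact Nat.sub_le_sub_left (Nat.mul_le_mul_left r hkn) _
    calc k.descFactorial (r + 1) * n ^ (r + 1)
        = ((k - r) * n) * (k.descFactorial r * n ^ r) := by rw [Nat.descFactorial_succ]; ring
      _ ≤ ((n - r) * k) * (n.descFactorial r * k ^ r) := Nat.mul_le_mul step ih
      _ = n.descFactorial (r + 1) * k ^ (r + 1) := by rw [Nat.descFactorial_succ]; ring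

theorem Nat.pow_mul_choose_sub_le_pow_mul_choose {r k n : ℕ} (hrk : r ≤ k) (hkn : k ≤ n) :
    n ^ r * (n - r).choose (k - r) ≤ k ^ r * n.choose k := by
  have hpos : 0 < n.descFactorial r := Nat.descFactorial_pos.2 (hrk.trans hkn)
  refine Nat.le_of_mul_le_mul_left ?_ hpos
  calc n.descFactorial r * (n ^ r * (n - r).choose (k - r))
      = n ^ r * r.factorial * (n.choose r * (n - r).choose (k - r)) := by
        rw [Nat.descFactorial_eq_factorial_mul_choose]; ring
    _ = n.choose k * (k.descFactorial r * n ^ r) := by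
        rw [← Nat.choose_mul hrk, Nat.descFactorial_eq_factorial_mul_choose]; ring
    _ ≤ n.choose k * (n.descFactorial r * k ^ r) :=
        Nat.mul_le_mul_left _ (Nat.descFactorial_mul_pow_le_descFactorial_mul_pow hkn r)
    _ = n.descFactorial r * (k ^ r * n.choose k) := by ring

theorem Finset.card_filter_powersetCard_univ_superset {α : Type*} [Fintype α] [DecidableEq α]
    {Q : Finset α} {k : ℕ} (hQk : #Q ≤ k) :
    #{X ∈ powersetCard k univ | Q ⊆ X} = (Fintype.card α - #Q).choose (k - #Q) := by
  rw [← card_compl, ← card_powersetCard]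
  refine card_nbij' (· \ Q) (· ∪ Q) ?_ ?_ ?_ ?_ <;> intro X hX <;>
    simp only [coe_filter, mem_coe, mem_powersetCard, subset_univ, true_and,
      Set.mem_ofPred_eq, subset_compl_iff_disjoint_right] at hX ⊢
  · exact ⟨sdiff_disjoint, by rw [card_sdiff_of_subset hX.2, hX.1]⟩
  · rw [card_union_of_disjoint hX.1, hX.2]
    exact ⟨Nat.sub_add_cancel hQk, subset_union_right⟩
  · exact sdiff_union_of_subset hX.2
  · exact union_sdiff_cancel_right hX.1

section RestrictedSumset

variable {G : Type*} [DecidableEq G]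

def Finset.IsWeakSidon [AddCommMonoid G] (X : Finset G) : Prop :=
  Set.InjOn (fun s => ∑ x ∈ s, x) (X.powersetCard 2 : Set (Finset G))

theorem Finset.image_add_offDiag_eq_image_sum_powersetCard_two [AddCommMonoid G] (X : Finset G) :
    X.offDiag.image (fun p => p.1 + p.2) = (X.powersetCard 2).image (fun s => ∑ x ∈ s, x) := by
  ext z
  simp only [mem_image, mem_offDiag, mem_powersetCard, Prod.exists]
  constructor
  · rintro ⟨a, b, ⟨ha, hb, hab⟩, rfl⟩
    exact ⟨{a, b}, ⟨by simp [insert_subset_iff, ha, hb], card_pair hab⟩, sum_pair hab⟩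
  · rintro ⟨s, ⟨hsX, hs⟩, rfl⟩
    obtain ⟨a, b, hab, rfl⟩ := card_eq_two.1 hs
    exact ⟨a, b, ⟨hsX (by simp), hsX (by simp), hab⟩, (sum_pair (f := id) hab).symm⟩

theorem Finset.card_image_add_offDiag_of_isWeakSidon [AddCommMonoid G] {X : Finset G}
    (hX : X.IsWeakSidon) :
    #(X.offDiag.image fun p => p.1 + p.2) = #X * (#X - 1) / 2 := by
  rw [image_add_offDiag_eq_image_sum_powersetCard_two, card_image_of_injOn hX, card_powersetCard,
    Nat.choose_two_right]

theorem Finset.disjoint_of_sum_eq_sum_of_card_eq_two [AddCancelCommMonoid G] {s t : Finset G}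
    (hs : #s = 2) (ht : #t = 2) (hst : ∑ x ∈ s, x = ∑ x ∈ t, x) (hne : s ≠ t) :
    Disjoint s t := by
  refine disjoint_left.2 fun x hxs hxt => hne ?_
  obtain ⟨y, hy⟩ := card_eq_one.1 (show #(s.erase x) = 1 by rw [card_erase_of_mem hxs, hs])
  obtain ⟨z, hz⟩ := card_eq_one.1 (show #(t.erase x) = 1 by rw [card_erase_of_mem hxt, ht])
  have hyz : y = z := by
    have hs' := add_sum_erase s id hxs
    have ht' := add_sum_erase t id hxt
    rw [hy, sum_singleton] at hs'
    rw [hz, sum_singleton] at ht'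
    exact add_left_cancel (hs'.trans (hst.trans ht'.symm))
  rw [← insert_erase hxs, ← insert_erase hxt, hy, hz, hyz]

variable [AddCommGroup G]

def addQuadruple (a b c : G) : Finset G := {a, b, c, a + b - c}

theorem exists_addQuadruple_subset_of_not_isWeakSidon {X : Finset G}
    (hX : ¬ X.IsWeakSidon) :
    ∃ a b c : G, #(addQuadruple a b c) = 4 ∧ addQuadruple a b c ⊆ X := by
  simp only [IsWeakSidon, Set.InjOn, mem_coe, mem_powersetCard, not_forall] at hX
  obtain ⟨s, ⟨hsX, hs⟩, t, ⟨htX, ht⟩, hst, hne⟩ := hX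
  have hdisj := disjoint_of_sum_eq_sum_of_card_eq_two hs ht hst hne
  obtain ⟨a, b, hab, rfl⟩ := card_eq_two.1 hs
  obtain ⟨c, d, hcd, rfl⟩ := card_eq_two.1 ht
  have hd : a + b - c = d := by
    rw [sum_pair hab, sum_pair hcd] at hst
    rw [hst, add_sub_cancel_left]
  have hunion : addQuadruple a b c = {a, b} ∪ {c, d} := by
    rw [addQuadruple, hd, insert_union, singleton_union]
  refine ⟨a, b, c, ?_, ?_⟩
  · rw [hunion, card_union_of_disjoint hdisj, hs, ht]
  · rw [hunion]
    exact union_subset hsX htX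

variable [Fintype G]

theorem card_filter_not_isWeakSidon_le {k : ℕ} (hk : 4 ≤ k) :
    #{X ∈ powersetCard k (univ : Finset G) |
        ¬ X.IsWeakSidon} ≤
      Fintype.card G ^ 3 * (Fintype.card G - 4).choose (k - 4) := by
  set T : Finset (G × G × G) := {p | #(addQuadruple p.1 p.2.1 p.2.2) = 4}
  calc _ ≤ #(T.biUnion fun p =>
        {X ∈ powersetCard k univ | addQuadruple p.1 p.2.1 p.2.2 ⊆ X}) := by
        refine card_le_card fun X hX => ?_
        rw [mem_filter] at hX
        obtain ⟨a, b, c, hcard, hsub⟩ := exists_addQuadruple_subset_of_not_isWeakSidon hX.2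
        exact mem_biUnion.2
          ⟨(a, b, c), mem_filter.2 ⟨mem_univ _, hcard⟩, mem_filter.2 ⟨hX.1, hsub⟩⟩
    _ ≤ #T * (Fintype.card G - 4).choose (k - 4) := by
        refine card_biUnion_le_card_mul _ _ _ fun p hp => ?_
        rw [mem_filter] at hp
        rw [card_filter_powersetCard_univ_superset (hp.2 ▸ hk), hp.2]
    _ ≤ Fintype.card G ^ 3 * (Fintype.card G - 4).choose (k - 4) := by
        gcongr
        exact (card_filter_le _ _).trans_eq (by simp [pow_three])

theorem card_mul_card_filter_not_isWeakSidon_le (k : ℕ) :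
    Fintype.card G * #{X ∈ powersetCard k (univ : Finset G) |
        ¬ X.IsWeakSidon} ≤
      k ^ 4 * (Fintype.card G).choose k := by
  set n := Fintype.card G
  by_cases hk : 4 ≤ k
  swap
  · rw [filter_eq_empty_iff.2, card_empty, mul_zero]
    · exact Nat.zero_le _
    intro X hX hnot
    obtain ⟨a, b, c, hcard, hsub⟩ := exists_addQuadruple_subset_of_not_isWeakSidon hnot
    have := card_le_card hsub
    rw [mem_powersetCard_univ] at hX
    omega
  by_cases hkn : n < k
  · rw [powersetCard_eq_empty.2 (by rwa [card_univ]), filter_empty, card_empty, mul_zero]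
    exact Nat.zero_le _
  calc n * #_ ≤ n * (n ^ 3 * (n - 4).choose (k - 4)) :=
        Nat.mul_le_mul_left _ (card_filter_not_isWeakSidon_le hk)
    _ = n ^ 4 * (n - 4).choose (k - 4) := by ring
    _ ≤ k ^ 4 * n.choose k := Nat.pow_mul_choose_sub_le_pow_mul_choose hk (not_lt.1 hkn)

end RestrictedSumset

theorem count_sidon_like_sets_general (n k : ℕ) [NeZero n]
    (δ : ℝ) (hk : (k : ℝ) ^ 4 ≤ δ * n) :
    (1 - δ) * (n.choose k : ℝ) ≤
      (((Finset.univ : Finset (Finset (ZMod n))).filter fun X =>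
        X.card = k ∧ (X.offDiag.image fun p => p.1 + p.2).card = k * (k - 1) / 2).card : ℝ) := by
  set S := powersetCard k (univ : Finset (ZMod n))
  have hsplit :
      (n.choose k : ℝ) = #{X ∈ S | X.IsWeakSidon} + #{X ∈ S | ¬ X.IsWeakSidon} := by
    rw [← Nat.cast_add, card_filter_add_card_filter_not, card_powersetCard, card_univ, ZMod.card]
  have hbad : (#{X ∈ S | ¬ X.IsWeakSidon} : ℝ) ≤ δ * n.choose k := by
    have h := card_mul_card_filter_not_isWeakSidon_le (G := ZMod n) k
    rw [ZMod.card] at h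
    refine le_of_mul_le_mul_left ?_ (show (0 : ℝ) < n by exact_mod_cast NeZero.pos n)
    calc (n : ℝ) * #{X ∈ S | ¬ X.IsWeakSidon} ≤ k ^ 4 * n.choose k := by exact_mod_cast h
      _ ≤ δ * n * n.choose k := by gcongr
      _ = n * (δ * n.choose k) := by ring
  calc (1 - δ) * (n.choose k : ℝ) ≤ #{X ∈ S | X.IsWeakSidon} := by
        rw [hsplit] at hbad ⊢; linarith
    _ ≤ _ := by
      refine mod_cast card_le_card fun X hX => ?_
      rw [mem_filter, mem_powersetCard_univ] at hX
      rw [mem_filter, ← hX.1]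
      exact ⟨mem_univ _, rfl, card_image_add_offDiag_of_isWeakSidon hX.2⟩

/-- Almost all `k`-subsets of `ℤ/nℤ` (for `n` prime, `k⁴ ≤ δn`) have all pairwise
sums of distinct elements distinct, i.e. `|X +̂ X| = k(k−1)/2`. -/
theorem count_sidon_like_sets (n k : ℕ) (hn : n.Prime) [NeZero n]
    (δ : ℝ) (hδ0 : 0 < δ) (hδ1 : δ < 1) (hk : (k : ℝ) ^ 4 ≤ δ * n) :
    (1 - δ) * (n.choose k : ℝ) ≤
      (((Finset.univ : Finset (Finset (ZMod n))).filter fun X =>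
        X.card = k ∧ (X.offDiag.image fun p => p.1 + p.2).card = k * (k - 1) / 2).card : ℝ) :=
  count_sidon_like_sets_general n k δ hk
end

section
/- Let n be prime, k ∈ ℕ, and let X, Y ⊆ ℤ/nℤ be k-element sets with |Y +̂ Y| = k(k−1)/2 (all pairwise sums of distinct elements of Y are distinct). Suppose every maximal independent set of the graph on vertex set Y with edges {y₁, y₂} whenever y₁ + y₂ ∈ X +̂ X has size at least t. Then |(X +̂ X) ∩ (Y +̂ Y)| ≤ k(k − t)/2. -/
/-!
Every vertex `v` of the graph lies in some maximal independent set, which has at least `t`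
elements and avoids the neighbourhood of `v`; hence `deg v + t ≤ k`. Summing over `Y`, twice the
number of edges is at most `k (k - t)`. Since the sums of distinct elements of `Y` are pairwise
distinct, each edge `{y₁, y₂}` is determined by `y₁ + y₂ ∈ (X +̂ X) ∩ (Y +̂ Y)`, so the edges are
in bijection with that intersection.
-/

open Classical

open Finset

variable {G : Type*} [AddCommMagma G]

def IsSumIndependent (A I : Finset G) : Prop :=
  ∀ y₁ ∈ I, ∀ y₂ ∈ I, y₁ ≠ y₂ → y₁ + y₂ ∉ A

lemma exists_maximal_isSumIndependent_mem (A : Finset G) {Y : Finset G} {v : G} (hv : v ∈ Y) :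
    ∃ I ⊆ Y, v ∈ I ∧ IsSumIndependent A I ∧
      ∀ J ⊆ Y, IsSumIndependent A J → I ⊆ J → J = I := by
  have hsingle : {v} ∈ Y.powerset.filter (IsSumIndependent A) :=
    mem_filter.2 ⟨by simpa using hv, fun y₁ h₁ y₂ h₂ hne => (hne (by simp_all)).elim⟩
  obtain ⟨I, hvI, hI⟩ := exists_le_maximal _ hsingle
  obtain ⟨hIY, hIind⟩ := mem_filter.1 hI.1
  refine ⟨I, mem_powerset.1 hIY, singleton_subset_iff.1 hvI, hIind,
    fun J hJY hJind hIJ => hIJ.antisymm' (hI.2 ?_ hIJ)⟩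
  exact mem_filter.2 ⟨mem_powerset.2 hJY, hJind⟩

variable [DecidableEq G]

def restrictedSumset (X : Finset G) : Finset G := X.offDiag.image fun p => p.1 + p.2

def sumNeighbors (A Y : Finset G) (v : G) : Finset G :=
  Y.filter fun w => v ≠ w ∧ v + w ∈ A

lemma one_lt_card_filter_offDiag_add_eq {Y : Finset G} {s : G}
    (hs : s ∈ restrictedSumset Y) : 1 < #(Y.offDiag.filter fun p => p.1 + p.2 = s) := by
  obtain ⟨p, hp, rfl⟩ := mem_image.1 hs
  obtain ⟨hp₁, hp₂, hne⟩ := mem_offDiag.1 hp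
  refine one_lt_card.2 ⟨p, ?_, p.swap, ?_, fun h => hne (congrArg Prod.fst h)⟩
  · exact mem_filter.2 ⟨hp, rfl⟩
  · exact mem_filter.2 ⟨mem_offDiag.2 ⟨hp₂, hp₁, hne.symm⟩, add_comm _ _⟩

lemma sum_card_filter_offDiag_add_eq (Y : Finset G) :
    ∑ s ∈ restrictedSumset Y, #(Y.offDiag.filter fun p => p.1 + p.2 = s) = #Y * (#Y - 1) := by
  rw [restrictedSumset, ← card_eq_sum_card_image, offDiag_card, Nat.mul_sub_one]

/-- Each fiber contains a pair and its swap, and the `#(Y +̂ Y) = C(#Y, 2)` fibers partition the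
`#Y * (#Y - 1)` ordered pairs. -/
lemma card_filter_offDiag_add_eq_two {Y : Finset G}
    (hY : #(restrictedSumset Y) = #Y * (#Y - 1) / 2) {s : G} (hs : s ∈ restrictedSumset Y) :
    #(Y.offDiag.filter fun p => p.1 + p.2 = s) = 2 := by
  have hsum : ∑ _s ∈ restrictedSumset Y, 2 =
      ∑ s ∈ restrictedSumset Y, #(Y.offDiag.filter fun p => p.1 + p.2 = s) := by
    rw [sum_card_filter_offDiag_add_eq, sum_const, smul_eq_mul, hY,
      Nat.div_mul_cancel (Nat.even_mul_pred_self _).two_dvd]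
  exact ((sum_eq_sum_iff_of_le fun s hs => one_lt_card_filter_offDiag_add_eq hs).1 hsum s hs).symm

lemma card_filter_offDiag_add_mem {Y : Finset G}
    (hY : #(restrictedSumset Y) = #Y * (#Y - 1) / 2) (A : Finset G) :
    #(Y.offDiag.filter fun p => p.1 + p.2 ∈ A) = 2 * #(A ∩ restrictedSumset Y) := by
  have hmaps : ∀ p ∈ Y.offDiag.filter (fun p => p.1 + p.2 ∈ A),
      p.1 + p.2 ∈ A ∩ restrictedSumset Y :=
    fun p hp => mem_inter.2 ⟨(mem_filter.1 hp).2, mem_image_of_mem _ (mem_filter.1 hp).1⟩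
  rw [card_eq_sum_card_fiberwise hmaps, sum_congr rfl fun s hs => ?_, sum_const, smul_eq_mul, mul_comm]
  obtain ⟨hsA, hsY⟩ := mem_inter.1 hs
  rw [filter_filter, ← card_filter_offDiag_add_eq_two hY hsY]
  congr 1
  exact filter_congr fun p _ => ⟨And.right, fun h => ⟨h ▸ hsA, h⟩⟩

lemma card_filter_offDiag_add_mem_eq_sum_card_sumNeighbors (A Y : Finset G) :
    #(Y.offDiag.filter fun p => p.1 + p.2 ∈ A) = ∑ v ∈ Y, #(sumNeighbors A Y v) := by
  rw [card_eq_sum_card_fiberwise (f := Prod.fst) (t := Y)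
    fun p hp => (mem_offDiag.1 (mem_filter.1 hp).1).1]
  refine sum_congr rfl fun v _ => card_nbij' Prod.snd (fun w => (v, w)) ?_ ?_ ?_ ?_ <;>
    intro p <;> grind [sumNeighbors, coe_filter]

lemma card_sumNeighbors_add_card_le {A Y I : Finset G} {v : G} (hIY : I ⊆ Y) (hvI : v ∈ I)
    (hI : IsSumIndependent A I) : #(sumNeighbors A Y v) + #I ≤ #Y := by
  have hdisj : Disjoint (sumNeighbors A Y v) I :=
    disjoint_left.2 fun w hw hwI => hI v hvI w hwI (mem_filter.1 hw).2.1 (mem_filter.1 hw).2.2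
  rw [← card_union_of_disjoint hdisj]
  exact card_le_card (union_subset (filter_subset _ _) hIY)

theorem two_mul_card_inter_restrictedSumset_add_le {A Y : Finset G} {t : ℕ}
    (hY : #(restrictedSumset Y) = #Y * (#Y - 1) / 2)
    (hmax : ∀ I ⊆ Y, IsSumIndependent A I →
      (∀ J ⊆ Y, IsSumIndependent A J → I ⊆ J → J = I) → t ≤ #I) :
    2 * #(A ∩ restrictedSumset Y) + #Y * t ≤ #Y * #Y := by
  have hdeg : ∀ v ∈ Y, #(sumNeighbors A Y v) + t ≤ #Y := fun v hv => by
    obtain ⟨I, hIY, hvI, hI, hImax⟩ := exists_maximal_isSumIndependent_mem A hv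
    have := card_sumNeighbors_add_card_le hIY hvI hI
    have := hmax I hIY hI hImax
    omega
  calc 2 * #(A ∩ restrictedSumset Y) + #Y * t
      = ∑ v ∈ Y, (#(sumNeighbors A Y v) + t) := by
        rw [← card_filter_offDiag_add_mem hY, card_filter_offDiag_add_mem_eq_sum_card_sumNeighbors,
          sum_add_distrib, sum_const, smul_eq_mul]
    _ ≤ ∑ _v ∈ Y, #Y := sum_le_sum hdeg
    _ = #Y * #Y := by rw [sum_const, smul_eq_mul]

theorem intersection_of_restricted_sumsets_general (n k t : ℕ)
    (X Y : Finset (ZMod n)) (hY : Y.card = k)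
    (hYsum : (Y.offDiag.image fun p => p.1 + p.2).card = k * (k - 1) / 2)
    (hmax : ∀ I : Finset (ZMod n), I ⊆ Y →
      (∀ y₁ ∈ I, ∀ y₂ ∈ I, y₁ ≠ y₂ → y₁ + y₂ ∉ X.offDiag.image fun p => p.1 + p.2) →
      (∀ J : Finset (ZMod n), J ⊆ Y →
        (∀ y₁ ∈ J, ∀ y₂ ∈ J, y₁ ≠ y₂ → y₁ + y₂ ∉ X.offDiag.image fun p => p.1 + p.2) →
        I ⊆ J → J = I) →
      t ≤ I.card) :
    ((((X.offDiag.image fun p => p.1 + p.2) ∩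
        (Y.offDiag.image fun p => p.1 + p.2)).card : ℝ)) ≤
      k * ((k : ℝ) - t) / 2 := by
  subst hY
  have hcount : (2 * #(restrictedSumset X ∩ restrictedSumset Y) + #Y * t : ℝ) ≤ #Y * #Y := by
    exact_mod_cast two_mul_card_inter_restrictedSumset_add_le hYsum hmax
  change (#(restrictedSumset X ∩ restrictedSumset Y) : ℝ) ≤ _
  linarith

/-- If `Y` has all pairwise sums of distinct elements distinct and every maximal
independent set of the Cayley sum graph over `X +̂ X` restricted to `Y` has at
least `t` vertices, then `|(X +̂ X) ∩ (Y +̂ Y)| ≤ k(k − t)/2`. -/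
theorem intersection_of_restricted_sumsets (n k t : ℕ) (hn : n.Prime)
    (X Y : Finset (ZMod n)) (hX : X.card = k) (hY : Y.card = k)
    (hYsum : (Y.offDiag.image fun p => p.1 + p.2).card = k * (k - 1) / 2)
    (hmax : ∀ I : Finset (ZMod n), I ⊆ Y →
      (∀ y₁ ∈ I, ∀ y₂ ∈ I, y₁ ≠ y₂ → y₁ + y₂ ∉ X.offDiag.image fun p => p.1 + p.2) →
      (∀ J : Finset (ZMod n), J ⊆ Y →
        (∀ y₁ ∈ J, ∀ y₂ ∈ J, y₁ ≠ y₂ → y₁ + y₂ ∉ X.offDiag.image fun p => p.1 + p.2) →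
        I ⊆ J → J = I) →
      t ≤ I.card) :
    ((((X.offDiag.image fun p => p.1 + p.2) ∩
        (Y.offDiag.image fun p => p.1 + p.2)).card : ℝ)) ≤
      k * ((k : ℝ) - t) / 2 :=
  intersection_of_restricted_sumsets_general n k t X Y hY hYsum hmax
end

section
/- Let G be a graph and Δ > 1. Then there exists a partition V(G) = X* ∪ X₁ ∪ ⋯ ∪ X_t such that |X*| ≤ 32(|V(G)|/Δ)², there are no edges between Xᵢ and Xⱼ for i ≠ j, and the diameter of the induced subgraph G[Xᵢ] is at most Δ for every i ∈ {1, …, t}. -/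
/-! Ball growing. Put `m = ⌊Δ/4⌋` and let `n = |V|`. Pick a vertex `v` of the set `S` not yet
handled and grow distance balls `B_ρ` around `v` in `G[S]`. The `m + 1` spheres of radii
`m + 1, …, 2m + 1` are disjoint, so one of them, `L = S_{ρ+1}`, has `|L| (m + 1) ≤ n`; if `L` is
nonempty, a shortest path to it shows `|B_ρ| ≥ ρ + 1 ≥ m + 1`, hence `|L| (m + 1)² ≤ n |B_ρ|`.
Now `B_ρ` becomes a part (its diameter in `G[B_ρ]` is at most `2ρ ≤ 4m ≤ Δ`), `L` goes to `X*`
and cuts `B_ρ` off from the rest, and we recurse on `S \ (B_ρ ∪ L)`. Summing the charges gives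
`|X*| (m + 1)² ≤ n²`, and `m + 1 > Δ/4` turns this into `|X*| ≤ 16 (n/Δ)²`. -/

open Classical

open scoped Finset

namespace Finset

lemma exists_card_mul_card_le_of_pairwiseDisjoint {ι α : Type*} [Fintype α]
    {T : Finset ι} (hT : T.Nonempty) {L : ι → Finset α} (hL : (T : Set ι).PairwiseDisjoint L) :
    ∃ j ∈ T, #(L j) * #T ≤ Fintype.card α := by
  refine exists_le_of_sum_le hT ?_
  rw [← sum_mul, ← card_biUnion hL, sum_const, smul_eq_mul, mul_comm]
  exact Nat.mul_le_mul_left _ (card_le_univ _)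

lemma biUnion_univ_equivFin_symm {α : Type*} [DecidableEq α] (P : Finset (Finset α)) :
    univ.biUnion (fun i => (P.equivFin.symm i : Finset α)) = P.biUnion id := by
  ext x
  simp only [mem_biUnion, mem_univ, true_and, id]
  exact ⟨fun ⟨i, hi⟩ => ⟨_, (P.equivFin.symm i).2, hi⟩,
    fun ⟨X, hX, hx⟩ => ⟨P.equivFin ⟨X, hX⟩, by simpa⟩⟩

end Finset

lemma le_sixteen_mul_div_sq_of_mul_floor_add_one_sq_le {x n Δ : ℝ} (hΔ : 0 < Δ) (hx : 0 ≤ x)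
    (h : x * (⌊Δ / 4⌋₊ + 1) ^ 2 ≤ n ^ 2) : x ≤ 16 * (n / Δ) ^ 2 := by
  have hΔm : Δ < 4 * (⌊Δ / 4⌋₊ + 1) := by linarith [Nat.lt_floor_add_one (Δ / 4)]
  have hΔsq : Δ ^ 2 ≤ 16 * ((⌊Δ / 4⌋₊ : ℝ) + 1) ^ 2 := by nlinarith
  rw [div_pow, mul_div_assoc', le_div_iff₀ (by positivity)]
  calc x * Δ ^ 2 ≤ x * (16 * ((⌊Δ / 4⌋₊ : ℝ) + 1) ^ 2) := by gcongr
    _ ≤ 16 * n ^ 2 := by linarith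

namespace SimpleGraph

variable {V : Type*}

/-- `G[S]` as a spanning subgraph of `G`: the vertices outside `S` become isolated. -/
def restrict (G : SimpleGraph V) (S : Set V) : SimpleGraph V where
  Adj a b := G.Adj a b ∧ a ∈ S ∧ b ∈ S
  symm := ⟨fun _ _ h => ⟨h.1.symm, h.2.2, h.2.1⟩⟩
  loopless := ⟨fun _ h => h.1.ne rfl⟩

@[simp]
lemma restrict_adj {G : SimpleGraph V} {S : Set V} {a b : V} :
    (G.restrict S).Adj a b ↔ G.Adj a b ∧ a ∈ S ∧ b ∈ S :=
  Iff.rfl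

lemma restrict_le (G : SimpleGraph V) (S : Set V) : G.restrict S ≤ G :=
  fun _ _ h => (restrict_adj.1 h).1

lemma Walk.end_mem_of_restrict {G : SimpleGraph V} {S : Set V} :
    ∀ {u w : V}, (G.restrict S).Walk u w → u ∈ S → w ∈ S
  | _, _, .nil, hu => hu
  | _, _, .cons h p, _ => p.end_mem_of_restrict (restrict_adj.1 h).2.2

lemma Reachable.mem_of_restrict {G : SimpleGraph V} {S : Set V} {u w : V}
    (h : (G.restrict S).Reachable u w) (hu : u ∈ S) : w ∈ S :=
  h.elim fun p => p.end_mem_of_restrict hu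

section Fintype

variable [Fintype V] {G : SimpleGraph V} {v w : V} {ρ : ℕ}

noncomputable def closedBall (G : SimpleGraph V) (v : V) (ρ : ℕ) : Finset V :=
  Finset.univ.filter fun w => G.Reachable v w ∧ G.dist v w ≤ ρ

noncomputable def sphere (G : SimpleGraph V) (v : V) (ρ : ℕ) : Finset V :=
  Finset.univ.filter fun w => G.Reachable v w ∧ G.dist v w = ρ

@[simp]
lemma mem_closedBall : w ∈ G.closedBall v ρ ↔ G.Reachable v w ∧ G.dist v w ≤ ρ := by
  simp [closedBall]

@[simp]
lemma mem_sphere : w ∈ G.sphere v ρ ↔ G.Reachable v w ∧ G.dist v w = ρ := by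
  simp [sphere]

lemma mem_closedBall_self : v ∈ G.closedBall v ρ := by
  simp

lemma pairwise_disjoint_sphere (G : SimpleGraph V) (v : V) :
    Pairwise fun i j => Disjoint (G.sphere v i) (G.sphere v j) := by
  intro i j hij
  simp only [Finset.disjoint_left, mem_sphere]
  rintro w ⟨-, rfl⟩ ⟨-, h⟩
  exact hij h

lemma mem_closedBall_or_mem_sphere_of_adj [DecidableEq V] {x : V} (hx : x ∈ G.closedBall v ρ)
    (hxw : G.Adj x w) :
    w ∈ G.closedBall v ρ ∪ G.sphere v (ρ + 1) := by
  rw [mem_closedBall] at hx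
  have hvw : G.Reachable v w := hx.1.trans hxw.reachable
  have hdist : G.dist v w ≤ G.dist v x + 1 := by
    simpa [dist_eq_one_iff_adj.2 hxw] using hxw.reachable.dist_triangle_right v
  simp only [Finset.mem_union, mem_closedBall, mem_sphere]
  rcases Nat.lt_or_ge ρ (G.dist v w) with hfar | hnear
  · exact .inr ⟨hvw, by omega⟩
  · exact .inl ⟨hvw, hnear⟩

lemma le_card_closedBall (h : (G.sphere v (ρ + 1)).Nonempty) :
    ρ + 1 ≤ #(G.closedBall v ρ) := by
  obtain ⟨w, hw⟩ := h
  rw [mem_sphere] at hw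
  obtain ⟨p, hp, hlen⟩ := hw.1.exists_path_of_dist
  have hsub : (Finset.range (ρ + 1)).image p.getVert ⊆ G.closedBall v ρ := by
    simp only [Finset.image_subset_iff, Finset.mem_range, mem_closedBall]
    intro i hi
    refine ⟨⟨p.take i⟩, (dist_le (p.take i)).trans ?_⟩
    simp only [Walk.take_length]
    omega
  have hinj : Set.InjOn p.getVert (Finset.range (ρ + 1)) :=
    hp.getVert_injOn.mono fun i hi => by
      simp only [Finset.coe_range, Set.mem_Iio, Set.mem_ofPred_eq] at hi ⊢; omega
  calc ρ + 1 = #((Finset.range (ρ + 1)).image p.getVert) := by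
        rw [Finset.card_image_of_injOn hinj, Finset.card_range]
    _ ≤ #(G.closedBall v ρ) := Finset.card_le_card hsub

lemma exists_sphere_card_mul_le (G : SimpleGraph V) (v : V) (m : ℕ) :
    ∃ ρ ∈ Finset.Icc m (2 * m),
      #(G.sphere v (ρ + 1)) * (m + 1) ^ 2 ≤ Fintype.card V * #(G.closedBall v ρ) := by
  obtain ⟨ρ, hρ, hcard⟩ := Finset.exists_card_mul_card_le_of_pairwiseDisjoint
    (T := Finset.Icc m (2 * m)) ⟨m, Finset.mem_Icc.2 ⟨le_rfl, by omega⟩⟩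
    (L := fun ρ => G.sphere v (ρ + 1))
    fun i _ j _ hij => G.pairwise_disjoint_sphere v (by simpa using hij)
  rw [Nat.card_Icc, show 2 * m + 1 - m = m + 1 by omega] at hcard
  refine ⟨ρ, hρ, ?_⟩
  rcases (G.sphere v (ρ + 1)).eq_empty_or_nonempty with hempty | hne
  · simp [hempty]
  calc #(G.sphere v (ρ + 1)) * (m + 1) ^ 2 = #(G.sphere v (ρ + 1)) * (m + 1) * (m + 1) := by ring
    _ ≤ Fintype.card V * (ρ + 1) := by gcongr; simp only [Finset.mem_Icc] at hρ; omega
    _ ≤ Fintype.card V * #(G.closedBall v ρ) := by gcongr; exact le_card_closedBall hne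

lemma exists_walk_support_subset_closedBall (hw : w ∈ G.closedBall v ρ) :
    ∃ p : G.Walk v w, p.length ≤ ρ ∧ ∀ x ∈ p.support, x ∈ G.closedBall v ρ := by
  rw [mem_closedBall] at hw
  obtain ⟨p, hp⟩ := hw.1.exists_walk_length_eq_dist
  refine ⟨p, hp ▸ hw.2, fun x hx => mem_closedBall.2 ⟨⟨p.takeUntil x hx⟩, ?_⟩⟩
  calc G.dist v x ≤ (p.takeUntil x hx).length := dist_le _
    _ ≤ p.length := p.length_takeUntil_le_length hx
    _ ≤ ρ := hp ▸ hw.2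

lemma induce_closedBall_reachable_dist_le {H : SimpleGraph V} (hHG : H ≤ G)
    (u w : (H.closedBall v ρ : Set V)) :
    (G.induce (H.closedBall v ρ : Set V)).Reachable u w ∧
      (G.induce (H.closedBall v ρ : Set V)).dist u w ≤ 2 * ρ := by
  obtain ⟨p, hp, hps⟩ := exists_walk_support_subset_closedBall u.2
  obtain ⟨q, hq, hqs⟩ := exists_walk_support_subset_closedBall w.2
  let r : G.Walk u w := (p.reverse.append q).mapLe hHG
  have hr : ∀ x ∈ r.support, x ∈ (H.closedBall v ρ : Set V) := by
    intro x hx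
    simp only [r, Walk.support_mapLe_eq_support, Walk.mem_support_append_iff,
      Walk.support_reverse, List.mem_reverse] at hx
    exact hx.elim (hps x) (hqs x)
  have hlen : (r.induce _ hr).length = p.length + q.length := by
    rw [← Walk.length_map, Walk.map_induce]
    simp [r]
  exact ⟨⟨r.induce _ hr⟩, (dist_le (r.induce _ hr)).trans (by omega)⟩

end Fintype

def Separated (G : SimpleGraph V) (X Y : Finset V) : Prop :=
  Disjoint X Y ∧ ∀ x ∈ X, ∀ y ∈ Y, ¬G.Adj x y

lemma Separated.symm {G : SimpleGraph V} {X Y : Finset V} (h : G.Separated X Y) :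
    G.Separated Y X :=
  ⟨h.1.symm, fun y hy x hx hyx => h.2 x hx y hy hyx.symm⟩

instance (G : SimpleGraph V) : Std.Symm G.Separated :=
  ⟨fun _ _ h => h.symm⟩

structure IsClustering (G : SimpleGraph V) (S : Finset V) (d : ℕ) (P : Finset (Finset V)) :
    Prop where
  subset : ∀ X ∈ P, X ⊆ S
  pairwise_separated : (P : Set (Finset V)).Pairwise G.Separated
  reachable_dist_le : ∀ X ∈ P, ∀ u w : (X : Set V),
    (G.induce (X : Set V)).Reachable u w ∧ (G.induce (X : Set V)).dist u w ≤ d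

namespace IsClustering

variable {G : SimpleGraph V} {S K N : Finset V} {d : ℕ} {P : Finset (Finset V)}

lemma empty : G.IsClustering S d ∅ :=
  ⟨by simp, by simp, by simp⟩

lemma insert [DecidableEq V] (hP : G.IsClustering (S \ N) d P) (hKN : K ⊆ N) (hNS : N ⊆ S)
    (hclosed : ∀ x ∈ K, ∀ y ∈ S, G.Adj x y → y ∈ N)
    (hK : ∀ u w : (K : Set V),
      (G.induce (K : Set V)).Reachable u w ∧ (G.induce (K : Set V)).dist u w ≤ d) :
    G.IsClustering S d (insert K P) := by
  have hsep : ∀ Y ∈ P, G.Separated K Y := fun Y hY =>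
    have hY : Y ⊆ S \ N := hP.subset Y hY
    ⟨Finset.disjoint_of_subset_left hKN (Finset.disjoint_sdiff.mono_right hY),
      fun x hx y hy hxy =>
        (Finset.mem_sdiff.1 (hY hy)).2 (hclosed x hx y (Finset.sdiff_subset (hY hy)) hxy)⟩
  refine ⟨?_, ?_, ?_⟩
  · simp only [Finset.mem_insert, forall_eq_or_imp]
    exact ⟨hKN.trans hNS, fun X hX => (hP.subset X hX).trans Finset.sdiff_subset⟩
  · rw [Finset.coe_insert, Set.pairwise_insert_of_symm]
    exact ⟨hP.pairwise_separated, fun Y hY _ => hsep Y hY⟩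
  · simp only [Finset.mem_insert, forall_eq_or_imp]
    exact ⟨hK, hP.reachable_dist_le⟩

end IsClustering

variable [Fintype V] [DecidableEq V]

lemma exists_isClustering (G : SimpleGraph V) (m : ℕ) (S : Finset V) :
    ∃ P, G.IsClustering S (4 * m) P ∧
      #(S \ P.biUnion id) * (m + 1) ^ 2 ≤ Fintype.card V * #S := by
  induction S using Finset.strongInduction with
  | H S ih =>
  obtain rfl | ⟨v, hv⟩ := S.eq_empty_or_nonempty
  · exact ⟨∅, .empty, by simp⟩
  set H := G.restrict S
  obtain ⟨ρ, hρ, hcard⟩ := H.exists_sphere_card_mul_le v m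
  set K := H.closedBall v ρ
  set L := H.sphere v (ρ + 1)
  have hKS : K ⊆ S := fun w hw => (mem_closedBall.1 hw).1.mem_of_restrict hv
  have hNS : K ∪ L ⊆ S :=
    Finset.union_subset hKS fun w hw => (mem_sphere.1 hw).1.mem_of_restrict hv
  obtain ⟨P, hP, hPcard⟩ := ih (S \ (K ∪ L))
    (Finset.sdiff_ssubset hNS ⟨v, Finset.mem_union_left _ mem_closedBall_self⟩)
  refine ⟨insert K P, hP.insert Finset.subset_union_left hNS ?_ ?_, ?_⟩
  · exact fun x hx y hy hxy => mem_closedBall_or_mem_sphere_of_adj hx ⟨hxy, hKS hx, hy⟩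
  · intro u w
    obtain ⟨hreach, hdist⟩ := induce_closedBall_reachable_dist_le (G.restrict_le S) u w
    exact ⟨hreach, hdist.trans (by simp only [Finset.mem_Icc] at hρ; omega)⟩
  have hsub : S \ (insert K P).biUnion id ⊆ L ∪ (S \ (K ∪ L)) \ P.biUnion id := by
    intro x
    simp only [Finset.mem_sdiff, Finset.mem_biUnion, Finset.mem_insert, Finset.mem_union, id]
    grind
  have hrest : #(S \ (K ∪ L)) + #K ≤ #S := by
    rw [← Finset.card_sdiff_add_card_eq_card hKS]
    gcongr
    exact Finset.subset_union_left
  calc #(S \ (insert K P).biUnion id) * (m + 1) ^ 2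
      ≤ (#L + #((S \ (K ∪ L)) \ P.biUnion id)) * (m + 1) ^ 2 := by
        gcongr
        exact (Finset.card_le_card hsub).trans (Finset.card_union_le _ _)
    _ ≤ Fintype.card V * #K + Fintype.card V * #(S \ (K ∪ L)) := by
        rw [add_mul]
        exact add_le_add hcard hPcard
    _ ≤ Fintype.card V * #S := by
        rw [← mul_add]
        gcongr
        omega

end SimpleGraph

/-- Weak regularity decomposition: every finite graph admits a partition
`V = X* ∪ X₁ ∪ ⋯ ∪ X_t` with `|X*| ≤ 32(|V|/Δ)²`, no edges between distinct
parts `Xᵢ, Xⱼ`, and each induced subgraph `G[Xᵢ]` connected of diameter ≤ Δ. -/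
theorem weak_regularity_partition (V : Type*) [Fintype V] [DecidableEq V]
    (G : SimpleGraph V) (Δ : ℝ) (hΔ : 1 < Δ) :
    ∃ (t : ℕ) (Xstar : Finset V) (Xs : Fin t → Finset V),
      (Xstar.card : ℝ) ≤ 32 * ((Fintype.card V : ℝ) / Δ) ^ 2 ∧
      (∀ i, Disjoint Xstar (Xs i)) ∧
      (∀ i j, i ≠ j → Disjoint (Xs i) (Xs j)) ∧
      (Xstar ∪ Finset.univ.biUnion Xs = Finset.univ) ∧
      (∀ i j, i ≠ j → ∀ u ∈ Xs i, ∀ v ∈ Xs j, ¬ G.Adj u v) ∧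
      (∀ i, ∀ u v : ((Xs i : Set V)),
        (G.induce (Xs i : Set V)).Reachable u v ∧
        (((G.induce (Xs i : Set V)).dist u v : ℝ)) ≤ Δ) := by
  have hΔ0 : 0 < Δ := by linarith
  obtain ⟨P, hP, hcard⟩ := G.exists_isClustering ⌊Δ / 4⌋₊ Finset.univ
  let Xs : Fin #P → Finset V := fun i => P.equivFin.symm i
  have hXs : ∀ i, Xs i ∈ P := fun i => (P.equivFin.symm i).2
  have hsep : ∀ i j, i ≠ j → G.Separated (Xs i) (Xs j) := fun i j hij =>
    hP.pairwise_separated (hXs i) (hXs j) fun h => hij (P.equivFin.symm.injective (Subtype.ext h))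
  refine ⟨#P, Finset.univ \ P.biUnion id, Xs, ?_, fun i => ?_, fun i j hij => (hsep i j hij).1,
    by rw [Finset.biUnion_univ_equivFin_symm, Finset.sdiff_union_of_subset (Finset.subset_univ _)],
    fun i j hij => (hsep i j hij).2, fun i u w => ?_⟩
  · rw [Finset.card_univ, ← sq] at hcard
    refine (le_sixteen_mul_div_sq_of_mul_floor_add_one_sq_le (n := Fintype.card V) hΔ0
      (Nat.cast_nonneg _) ?_).trans ?_
    · exact_mod_cast hcard
    · gcongr; norm_num
  · exact disjoint_sdiff_self_left.mono_right (Finset.subset_biUnion_of_mem id (hXs i))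
  · obtain ⟨hreach, hdist⟩ := hP.reachable_dist_le _ (hXs i) u w
    have hdist' : ((G.induce (Xs i : Set V)).dist u w : ℝ) ≤ 4 * ⌊Δ / 4⌋₊ := by
      exact_mod_cast hdist
    exact ⟨hreach, by linarith [Nat.floor_le (by linarith : 0 ≤ Δ / 4)]⟩
end

section
/- Let X ⊆ ℝ^d be finite, let W ⊆ ℝ^d be a subspace, and for z in Z = Π_{W^⊥}(X) write ⟦z⟧ = {x ∈ X : Π_{W^⊥}(x) = z}, where Π_{W^⊥} is orthogonal projection onto W^⊥. Fix u* ∈ ℝ^d and set ⟦0⟧* = {x ∈ ⟦0⟧ : ⟨x, u*⟩ = 0}. Then there exists T'' ⊆ X with |T''| ≤ 2|Z| such that |(⟦0⟧ + T'') \ (X + ⟦0⟧*)| ≥ |Z|·(|⟦0⟧| − |⟦0⟧*|). -/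
open Classical Pointwise

/-- Orthogonal projection of `x` onto `W^⊥`, viewed inside `ℝ^d`. -/
noncomputable def projPerp {d : ℕ} (W : Submodule ℝ (EuclideanSpace ℝ (Fin d)))
    (x : EuclideanSpace ℝ (Fin d)) : EuclideanSpace ℝ (Fin d) :=
  ((Wᗮ.orthogonalProjection x : Wᗮ) : EuclideanSpace ℝ (Fin d))

/-- The set of nonempty fibres: the image of `X` under projection onto `W^⊥`. -/
noncomputable def projSet {d : ℕ} (X : Finset (EuclideanSpace ℝ (Fin d)))
    (W : Submodule ℝ (EuclideanSpace ℝ (Fin d))) : Finset (EuclideanSpace ℝ (Fin d)) :=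
  X.image (projPerp W)

/-- The fibre of `X` over `z`. -/
noncomputable def fibre {d : ℕ} (X : Finset (EuclideanSpace ℝ (Fin d)))
    (W : Submodule ℝ (EuclideanSpace ℝ (Fin d))) (z : EuclideanSpace ℝ (Fin d)) :
    Finset (EuclideanSpace ℝ (Fin d)) :=
  X.filter fun x => projPerp W x = z

/-! Write `π` for the projection onto `W^⊥` and `f = ⟨·, u*⟩`. For `z ∈ Z` and `x ∈ ⟦0⟧` with
`f x ≠ 0`, shift `x` by a maximiser of `f` on `⟦z⟧` if `f x > 0` and by a minimiser if `f x < 0`.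
The result lies over `z`, but `f` takes there a value outside its range on `⟦z⟧`, so it is not
of the form `a + b` with `a ∈ X` and `b ∈ ⟦0⟧*`. The shift can be undone: `z` is recovered by
projecting, and the sign of `f x` by comparing with the maximum of `f` on `⟦z⟧`. Hence
`Z × (⟦0⟧ \ ⟦0⟧*)` injects into `(⟦0⟧ + T'') \ (X + ⟦0⟧*)`, where `T''` collects the
maximisers and minimisers. -/

open Finset

section

variable {E V G : Type*} [AddCommGroup E] [AddCommGroup V] [AddCommGroup G] [LinearOrder G]
  (π : E →+ V) (f : E →+ G)

theorem add_notMem_add_of_forall_le [DecidableEq E] [IsOrderedAddMonoid G] {X S : Finset E}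
    {t x : E} (hS : ∀ b ∈ S, π b = 0 ∧ f b = 0) (ht : ∀ a ∈ X, π a = π t → f a ≤ f t)
    (hx : π x = 0) (hfx : 0 < f x) : x + t ∉ X + S := by
  intro hmem
  obtain ⟨a, ha, b, hb, hab⟩ := mem_add.mp hmem
  obtain ⟨hπb, hfb⟩ := hS b hb
  have hπa : π a = π t := by simpa [hπb, hx] using congrArg π hab
  have hfa : f a = f x + f t := by simpa [hfb] using congrArg f hab
  exact (ht a ha hπa).not_gt (hfa ▸ lt_add_of_pos_left _ hfx)

def shiftOffFibre (m n : V → E) (z : V) (x : E) : E :=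
  x + if 0 < f x then m z else n z

variable [DecidableEq V]

def IsFibreMaxSelector (X : Finset E) (m : V → E) : Prop :=
  ∀ z ∈ X.image π, m z ∈ X ∧ π (m z) = z ∧ ∀ a ∈ X, π a = z → f a ≤ f (m z)

theorem exists_isFibreMaxSelector (X : Finset E) : ∃ m, IsFibreMaxSelector π f X m := by
  have h : ∀ z ∈ X.image π, ∃ t ∈ X.filter (π · = z), ∀ a ∈ X.filter (π · = z), f a ≤ f t := by
    intro z hz
    obtain ⟨x, hx, rfl⟩ := mem_image.mp hz
    exact exists_max_image _ _ ⟨x, mem_filter.mpr ⟨hx, rfl⟩⟩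
  choose! m hmem hmax using h
  refine ⟨m, fun z hz => ?_⟩
  obtain ⟨hX, hπ⟩ := mem_filter.mp (hmem z hz)
  exact ⟨hX, hπ, fun a ha haz => hmax z hz a (mem_filter.mpr ⟨ha, haz⟩)⟩

variable {π f} {X : Finset E} {m n : V → E}

theorem map_shiftOffFibre (hm : IsFibreMaxSelector π f X m)
    (hn : IsFibreMaxSelector π (-f) X n) {z : V} (hz : z ∈ X.image π) {x : E} (hx : π x = 0) :
    π (shiftOffFibre f m n z x) = z := by
  unfold shiftOffFibre
  split_ifs
  · simp [hx, (hm z hz).2.1]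
  · simp [hx, (hn z hz).2.1]

theorem shiftOffFibre_mem_image_add [DecidableEq E] {z : V} (hz : z ∈ X.image π)
    {K : Finset E} {x : E} (hx : x ∈ K) :
    shiftOffFibre f m n z x ∈ K + ((X.image π).image m ∪ (X.image π).image n) := by
  unfold shiftOffFibre
  split_ifs
  · exact add_mem_add hx (mem_union_left _ (mem_image_of_mem m hz))
  · exact add_mem_add hx (mem_union_right _ (mem_image_of_mem n hz))

theorem shiftOffFibre_notMem_add [DecidableEq E] [IsOrderedAddMonoid G]
    (hm : IsFibreMaxSelector π f X m) (hn : IsFibreMaxSelector π (-f) X n) {z : V}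
    (hz : z ∈ X.image π) {S : Finset E} (hS : ∀ b ∈ S, π b = 0 ∧ f b = 0) {x : E}
    (hx : π x = 0) (hfx : f x ≠ 0) :
    shiftOffFibre f m n z x ∉ X + S := by
  unfold shiftOffFibre
  split_ifs with hpos
  · obtain ⟨-, hπm, hmax⟩ := hm z hz
    exact add_notMem_add_of_forall_le π f hS (fun a ha h => hmax a ha (h.trans hπm)) hx hpos
  · obtain ⟨-, hπn, hmax⟩ := hn z hz
    refine add_notMem_add_of_forall_le π (-f) (fun b hb => ?_)
      (fun a ha h => hmax a ha (h.trans hπn)) hx ?_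
    · simpa using hS b hb
    · simpa using lt_of_le_of_ne (not_lt.mp hpos) hfx

theorem pos_iff_lt_shiftOffFibre [IsOrderedAddMonoid G] (hm : IsFibreMaxSelector π f X m)
    (hn : IsFibreMaxSelector π (-f) X n) {z : V} (hz : z ∈ X.image π) {x : E} (hfx : f x ≠ 0) :
    0 < f x ↔ f (m z) < f (shiftOffFibre f m n z x) := by
  unfold shiftOffFibre
  split_ifs with hpos
  · simp [hpos]
  · obtain ⟨hnX, hπn, -⟩ := hn z hz
    have hnm : f (n z) ≤ f (m z) := (hm z hz).2.2 _ hnX hπn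
    have hneg : f x < 0 := lt_of_le_of_ne (not_lt.mp hpos) hfx
    simpa [hpos] using (add_lt_of_neg_left _ hneg).le.trans hnm

theorem shiftOffFibre_injOn [IsOrderedAddMonoid G] (hm : IsFibreMaxSelector π f X m)
    (hn : IsFibreMaxSelector π (-f) X n) :
    Set.InjOn (fun p : V × E => shiftOffFibre f m n p.1 p.2)
      {p | p.1 ∈ X.image π ∧ π p.2 = 0 ∧ f p.2 ≠ 0} := by
  rintro ⟨z, x⟩ ⟨hz, hx, hfx⟩ ⟨z', x'⟩ ⟨hz', hx', hfx'⟩ heq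
  dsimp only at hz hx hfx hz' hx' hfx' heq
  obtain rfl : z = z' := by
    rw [← map_shiftOffFibre hm hn hz hx, heq, map_shiftOffFibre hm hn hz' hx']
  have hsign : (0 < f x ↔ 0 < f x') := by
    rw [pos_iff_lt_shiftOffFibre hm hn hz hfx, pos_iff_lt_shiftOffFibre hm hn hz hfx', heq]
  unfold shiftOffFibre at heq
  rw [if_congr hsign rfl rfl] at heq
  rw [add_right_cancel heq]

variable (π f) in
theorem exists_subset_card_mul_card_sdiff_le [DecidableEq E] [IsOrderedAddMonoid G]
    (X : Finset E) :
    ∃ T ⊆ X, #T ≤ 2 * #(X.image π) ∧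
      #(X.image π) * (#(X.filter (π · = 0)) - #((X.filter (π · = 0)).filter (f · = 0))) ≤
        #((X.filter (π · = 0) + T) \ (X + (X.filter (π · = 0)).filter (f · = 0))) := by
  set Z := X.image π
  set K := X.filter (π · = 0)
  set K₀ := K.filter (f · = 0)
  obtain ⟨m, hm⟩ := exists_isFibreMaxSelector π f X
  obtain ⟨n, hn⟩ := exists_isFibreMaxSelector π (-f) X
  have hK₀ : ∀ b ∈ K₀, π b = 0 ∧ f b = 0 := fun b hb =>
    ⟨(mem_filter.mp (mem_filter.mp hb).1).2, (mem_filter.mp hb).2⟩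
  have hdom : ∀ p ∈ Z ×ˢ (K \ K₀), p.1 ∈ Z ∧ π p.2 = 0 ∧ f p.2 ≠ 0 := by
    intro p hp
    obtain ⟨hz, hx⟩ := mem_product.mp hp
    obtain ⟨hxK, hxK₀⟩ := mem_sdiff.mp hx
    exact ⟨hz, (mem_filter.mp hxK).2, fun h => hxK₀ (mem_filter.mpr ⟨hxK, h⟩)⟩
  refine ⟨Z.image m ∪ Z.image n, ?_, ?_, ?_⟩
  · simp only [union_subset_iff, image_subset_iff]
    exact ⟨fun z hz => (hm z hz).1, fun z hz => (hn z hz).1⟩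
  · calc #(Z.image m ∪ Z.image n) ≤ #(Z.image m) + #(Z.image n) := card_union_le _ _
      _ ≤ 2 * #Z := by rw [two_mul]; exact add_le_add card_image_le card_image_le
  · rw [← card_sdiff_of_subset (filter_subset _ _), ← card_product]
    refine card_le_card_of_injOn (fun p => shiftOffFibre f m n p.1 p.2) ?_
      ((shiftOffFibre_injOn hm hn).mono ?_)
    · intro p hp
      obtain ⟨hz, hx, hfx⟩ := hdom p hp
      have hxK : p.2 ∈ K := (mem_sdiff.mp (mem_product.mp hp).2).1
      exact mem_sdiff.mpr
        ⟨shiftOffFibre_mem_image_add hz hxK, shiftOffFibre_notMem_add hm hn hz hK₀ hx hfx⟩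
    · exact fun p hp => hdom p hp

end

theorem projPerp_add {d : ℕ} (W : Submodule ℝ (EuclideanSpace ℝ (Fin d)))
    (x y : EuclideanSpace ℝ (Fin d)) :
    projPerp W (x + y) = projPerp W x + projPerp W y := by
  simp [projPerp]

/-- Offsetting the loss of the zero fibre: there is `T'' ⊆ X` with `|T''| ≤ 2|Z|`
and `|(⟦0⟧ + T'') \ (X + ⟦0⟧*)| ≥ |Z|·(|⟦0⟧| − |⟦0⟧*|)`. -/
theorem offset_zero_fibre (d : ℕ) (X : Finset (EuclideanSpace ℝ (Fin d)))
    (W : Submodule ℝ (EuclideanSpace ℝ (Fin d))) (ustar : EuclideanSpace ℝ (Fin d)) :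
    ∃ T'' ⊆ X, T''.card ≤ 2 * (projSet X W).card ∧
      (projSet X W).card *
          ((fibre X W 0).card - ((fibre X W 0).filter fun x => (inner ℝ x ustar : ℝ) = 0).card) ≤
        (((fibre X W 0) + T'') \
          (X + (fibre X W 0).filter fun x => (inner ℝ x ustar : ℝ) = 0)).card :=
  exists_subset_card_mul_card_sdiff_le (AddMonoidHom.mk' (projPerp W) (projPerp_add W))
    (AddMonoidHom.mk' (fun x => inner ℝ x ustar) fun x y => inner_add_left x y ustar) X
end

section
/- Let X be a finite subset of an abelian group, F a p-random subset of X (each element included independently with probability q ∈ [0,1]), and y an element of the group. Then ℙ(y ∉ F +̂ F) = (1 − q²)^{ρ(y)/2}, where ρ(y) = |{(x₁, x₂) ∈ X² : x₁ ≠ x₂, x₁ + x₂ = y}|. -/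
open Classical

private lemma sum_binom {α : Type*} [DecidableEq α] (q : ℝ) (X : Finset α) :
    ∑ F ∈ X.powerset, q ^ F.card * (1 - q) ^ (X.card - F.card) = 1 := by
  have h := Finset.prod_add (fun _ : α => q) (fun _ => (1 - q)) X
  simp only [Finset.prod_const] at h
  have h2 : ∀ F ∈ X.powerset, q ^ F.card * (1 - q) ^ (X.card - F.card)
      = q ^ F.card * (1 - q) ^ (X \ F).card := by
    intro F hF
    rw [Finset.card_sdiff_of_subset (Finset.mem_powerset.mp hF)]
  rw [Finset.sum_congr rfl h2, ← h]
  have : q + (1 - q) = 1 := by ring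
  rw [this, one_pow]

private lemma aux (n : ℕ) (y : ZMod n) (q : ℝ) (X : Finset (ZMod n)) :
    ∑ F ∈ X.powerset,
        (if y ∈ F.offDiag.image fun p => p.1 + p.2 then 0
          else q ^ F.card * (1 - q) ^ (X.card - F.card)) =
      (1 - q ^ 2) ^ ((X.offDiag.filter fun p => p.1 + p.2 = y).card / 2) := by
  induction X using Finset.strongInduction with
  | _ X ih =>
  by_cases hS : (X.offDiag.filter fun p => p.1 + p.2 = y).Nonempty
  · obtain ⟨⟨a, b⟩, hab⟩ := hS
    simp only [Finset.mem_filter, Finset.mem_offDiag] at hab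
    obtain ⟨⟨haX, hbX, hne⟩, hsum⟩ := hab
    set X' := (X.erase a).erase b with hX'def
    have hmemX' : ∀ p : ZMod n, p ∈ X' ↔ p ≠ b ∧ p ≠ a ∧ p ∈ X := by
      intro p
      simp [hX'def, Finset.mem_erase, and_assoc]
    have haX' : a ∉ X' := by simp [hmemX']
    have hbX' : b ∉ X' := by simp [hmemX']
    have hbin : b ∈ X.erase a := Finset.mem_erase.mpr ⟨fun h => hne h.symm, hbX⟩
    have hXeq : X = insert a (insert b X') := by
      rw [hX'def, Finset.insert_erase hbin, Finset.insert_erase haX]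
    have haiX' : a ∉ insert b X' := by
      simp [Finset.mem_insert, hne, haX']
    have hX'sub : X' ⊆ X := (Finset.erase_subset _ _).trans (Finset.erase_subset _ _)
    have hssub : X' ⊂ X := Finset.ssubset_of_subset_of_ssubset
      (Finset.erase_subset _ _) (Finset.erase_ssubset haX)
    have hcardX : X.card = X'.card + 2 := by
      rw [hXeq, Finset.card_insert_of_notMem haiX',
        Finset.card_insert_of_notMem hbX']
    -- key membership lemma
    have meml : ∀ c d : ZMod n, c + d = y → ∀ F : Finset (ZMod n), c ∉ F → d ∉ F →
        ((y ∈ (insert c F).offDiag.image fun p => p.1 + p.2)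
          ↔ (y ∈ F.offDiag.image fun p => p.1 + p.2)) := by
      intro c d hcd F hcF hdF
      constructor
      · intro h
        obtain ⟨⟨p1, p2⟩, hp, hpy⟩ := Finset.mem_image.mp h
        obtain ⟨h1, h2, h12⟩ := Finset.mem_offDiag.mp hp
        rcases Finset.mem_insert.mp h1 with rfl | h1'
        · -- p1 = c, so p2 = d
          have : p2 = d := by
            have : p1 + p2 = p1 + d := by rw [hpy, hcd]
            exact add_left_cancel this
          subst this
          rcases Finset.mem_insert.mp h2 with h | h
          · exact absurd h.symm h12
          · exact absurd h hdF
        · rcases Finset.mem_insert.mp h2 with rfl | h2'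
          · -- p2 = c, so p1 = d
            have : p1 = d := by
              have : p1 + p2 = d + p2 := by rw [hpy, ← hcd, add_comm]
              exact add_right_cancel this
            exact absurd (this ▸ h1') hdF
          · exact Finset.mem_image.mpr ⟨(p1, p2),
              Finset.mem_offDiag.mpr ⟨h1', h2', h12⟩, hpy⟩
      · intro h
        obtain ⟨p, hp, hpy⟩ := Finset.mem_image.mp h
        exact Finset.mem_image.mpr ⟨p,
          Finset.offDiag_mono (Finset.subset_insert c F) hp, hpy⟩
    -- rewrite the sum
    have hpow : X.powerset = (insert a (insert b X')).powerset := by rw [← hXeq]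
    rw [hpow, Finset.sum_powerset_insert haiX', Finset.sum_powerset_insert hbX',
      Finset.sum_powerset_insert hbX', ← Finset.sum_add_distrib, ← Finset.sum_add_distrib,
      ← Finset.sum_add_distrib]
    have hterm : ∀ F ∈ X'.powerset,
        ((if y ∈ F.offDiag.image fun p => p.1 + p.2 then 0
            else q ^ F.card * (1 - q) ^ (X.card - F.card)) +
          (if y ∈ (insert b F).offDiag.image fun p => p.1 + p.2 then 0
            else q ^ (insert b F).card * (1 - q) ^ (X.card - (insert b F).card)) +
          ((if y ∈ (insert a F).offDiag.image fun p => p.1 + p.2 then 0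
            else q ^ (insert a F).card * (1 - q) ^ (X.card - (insert a F).card)) +
          (if y ∈ (insert a (insert b F)).offDiag.image fun p => p.1 + p.2 then 0
            else q ^ (insert a (insert b F)).card *
              (1 - q) ^ (X.card - (insert a (insert b F)).card)))) =
        (1 - q ^ 2) * (if y ∈ F.offDiag.image fun p => p.1 + p.2 then 0
            else q ^ F.card * (1 - q) ^ (X'.card - F.card)) := by
      intro F hF
      have hFsub : F ⊆ X' := Finset.mem_powerset.mp hF
      have haF : a ∉ F := fun h => haX' (hFsub h)
      have hbF : b ∉ F := fun h => hbX' (hFsub h)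
      have haF' : a ∉ insert b F := by simp [Finset.mem_insert, hne, haF]
      have e1 := meml b a (by rw [add_comm]; exact hsum) F hbF haF
      have e2 := meml a b hsum F haF hbF
      have e3 : y ∈ (insert a (insert b F)).offDiag.image fun p => p.1 + p.2 :=
        Finset.mem_image.mpr ⟨(a, b), Finset.mem_offDiag.mpr
          ⟨Finset.mem_insert_self a _,
           Finset.mem_insert_of_mem (Finset.mem_insert_self b F), hne⟩, hsum⟩
      rw [if_pos e3]
      rw [Finset.card_insert_of_notMem hbF, Finset.card_insert_of_notMem haF]
      have hle : F.card ≤ X'.card := Finset.card_le_card hFsub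
      have m1 : X.card - F.card = X'.card - F.card + 2 := by omega
      have m2 : X.card - (F.card + 1) = X'.card - F.card + 1 := by omega
      rw [m1, m2]
      by_cases co : y ∈ F.offDiag.image fun p => p.1 + p.2
      · rw [if_pos co, if_pos (e1.mpr co), if_pos (e2.mpr co), if_pos co]
        ring
      · rw [if_neg co, if_neg (fun h => co (e1.mp h)), if_neg (fun h => co (e2.mp h)),
          if_neg co]
        ring
    rw [Finset.sum_congr rfl hterm, ← Finset.mul_sum, ih X' hssub]
    -- now the filter cardinality
    have hSet : X.offDiag.filter (fun p => p.1 + p.2 = y) =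
        insert (a, b) (insert (b, a) (X'.offDiag.filter fun p => p.1 + p.2 = y)) := by
      ext ⟨p1, p2⟩
      simp only [Finset.mem_filter, Finset.mem_offDiag, Finset.mem_insert, Prod.mk.injEq,
        hmemX']
      constructor
      · rintro ⟨⟨h1, h2, h12⟩, hy⟩
        by_cases e1 : p1 = a
        · subst e1
          left
          exact ⟨rfl, add_left_cancel (hy.trans hsum.symm)⟩
        by_cases e2 : p1 = b
        · subst e2
          right; left
          refine ⟨rfl, ?_⟩
          have : p2 + p1 = a + p1 := by
            rw [add_comm p2 p1, hy, ← hsum, add_comm]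
          exact add_right_cancel this
        · right; right
          have e3 : p2 ≠ a := by
            intro h; subst h
            apply e2
            have : p1 + p2 = b + p2 := by rw [hy, ← hsum, add_comm]
            exact add_right_cancel this
          have e4 : p2 ≠ b := by
            intro h; subst h
            apply e1
            have : p1 + p2 = a + p2 := by rw [hy, ← hsum]
            exact add_right_cancel this
          exact ⟨⟨⟨e2, e1, h1⟩, ⟨e4, e3, h2⟩, h12⟩, hy⟩
      · rintro (⟨rfl, rfl⟩ | ⟨rfl, rfl⟩ | ⟨⟨h1, h2, h12⟩, hy⟩)
        · exact ⟨⟨haX, hbX, hne⟩, hsum⟩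
        · exact ⟨⟨hbX, haX, fun h => hne h.symm⟩, by rw [add_comm]; exact hsum⟩
        · exact ⟨⟨h1.2.2, h2.2.2, h12⟩, hy⟩
    have hnotmem1 : ((b : ZMod n), a) ∉ X'.offDiag.filter fun p => p.1 + p.2 = y := by
      intro h
      exact hbX' (Finset.mem_offDiag.mp (Finset.mem_filter.mp h).1).1
    have hnotmem2 : ((a : ZMod n), b) ∉
        insert (b, a) (X'.offDiag.filter fun p => p.1 + p.2 = y) := by
      intro h
      rcases Finset.mem_insert.mp h with h | h
      · exact hne (congrArg Prod.fst h)
      · exact haX' (Finset.mem_offDiag.mp (Finset.mem_filter.mp h).1).1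
    have hcardS : (X.offDiag.filter fun p => p.1 + p.2 = y).card =
        (X'.offDiag.filter fun p => p.1 + p.2 = y).card + 2 := by
      rw [hSet, Finset.card_insert_of_notMem hnotmem2,
        Finset.card_insert_of_notMem hnotmem1]
    rw [hcardS]
    have hdiv : ((X'.offDiag.filter fun p => p.1 + p.2 = y).card + 2) / 2 =
        (X'.offDiag.filter fun p => p.1 + p.2 = y).card / 2 + 1 := by omega
    rw [hdiv, pow_succ]
    ring
  · -- empty case
    have hempty : (X.offDiag.filter fun p => p.1 + p.2 = y) = ∅ :=
      Finset.not_nonempty_iff_eq_empty.mp hS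
    have h2 : ∀ F ∈ X.powerset,
        (if y ∈ F.offDiag.image fun p => p.1 + p.2 then 0
          else q ^ F.card * (1 - q) ^ (X.card - F.card)) =
        q ^ F.card * (1 - q) ^ (X.card - F.card) := by
      intro F hF
      rw [if_neg]
      intro h
      obtain ⟨p, hp, hpy⟩ := Finset.mem_image.mp h
      have : p ∈ X.offDiag.filter fun p => p.1 + p.2 = y :=
        Finset.mem_filter.mpr ⟨Finset.offDiag_mono (Finset.mem_powerset.mp hF) hp, hpy⟩
      rw [hempty] at this
      exact absurd this (Finset.notMem_empty p)
    rw [Finset.sum_congr rfl h2, sum_binom, hempty]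
    simp

/-- For a `q`-random subset `F` of `X ⊆ ℤ/nℤ` (`n` an odd prime), the probability
that a given `y` is not in the restricted sumset `F +̂ F` equals
`(1 − q²)^(ρ(y)/2)`, where `ρ(y)` counts ordered pairs of distinct elements of `X`
summing to `y`.  The probability is expressed as the weighted sum over all
subsets `F ⊆ X` of the Bernoulli product weight `q^|F| (1−q)^(|X|−|F|)`. -/
theorem prob_missing_sum (n : ℕ) (hn : n.Prime) (hodd : Odd n)
    (X : Finset (ZMod n)) (y : ZMod n) (q : ℝ) (hq0 : 0 ≤ q) (hq1 : q ≤ 1) :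
    ∑ F ∈ X.powerset,
        (if y ∈ F.offDiag.image fun p => p.1 + p.2 then 0
          else q ^ F.card * (1 - q) ^ (X.card - F.card)) =
      (1 - q ^ 2) ^ ((X.offDiag.filter fun p => p.1 + p.2 = y).card / 2) := by
  exact aux n y q X
end
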